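/- arXiv:2407.11760 — 5 statements merged into one kernel-verified Lean document; each statement's English description precedes it below -/
import Mathlib

section
/- Let C ⊆ ℝ^n be a nonempty compact convex set of diameter δ > 0 and let f : ℝ^n → ℝ be convex, differentiable, and L-smooth on C. Let (x^t)_{t≥0} be a Frank-Wolfe sequence with line-search: x^0 ∈ C, and for every t there is v^t ∈ C with ⟨∇f(x^t), v^t⟩ = min_{v∈C} ⟨∇f(x^t), v⟩, and x^{t+1} = x^t + η^t(v^t − x^t) where η^t ∈ [0,1] satisfies f(x^t + η^t(v^t − x^t)) ≤ f(x^t + η(v^t − x^t)) for all η ∈ [0,1]. Then for every t ≥ 1, f(x^t) − min_{x∈C} f(x) ≤ 2Lδ²/(t+2). -/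
/-!
Along a Frank–Wolfe step of size `s`, `L`-smoothness, the linear minimisation defining `v` and the
first-order characterisation of convexity give `h (t+1) ≤ (1 - s) h t + s² L δ² / 2` for the
primal gap `h t = f (x t) - f y` and every `s ∈ [0, 1]`, because the line search does at least as
well as any fixed step. Choosing `s = 2 / (t + 2)` turns this recurrence into `h t ≤ 2 L δ² / (t + 2)`
by induction.
-/

open RealInnerProductSpace Set

variable {E : Type*} [NormedAddCommGroup E] [InnerProductSpace ℝ E]

def LSmoothOn (C : Set E) (f : E → ℝ) (g : E → E) (L : ℝ) : Prop :=
  ∀ x ∈ C, ∀ y ∈ C, f y ≤ f x + ⟪g x, y - x⟫ + L / 2 * ‖y - x‖ ^ 2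

variable [CompleteSpace E]

theorem ConvexOn.inner_gradient_le_sub {C : Set E} {f : E → ℝ} {a b g : E}
    (hf : ConvexOn ℝ C f) (ha : a ∈ C) (hb : b ∈ C) (hg : HasGradientAt f g a) :
    ⟪g, b - a⟫ ≤ f b - f a := by
  set φ : ℝ → ℝ := f ∘ AffineMap.lineMap a b
  have hline : ConvexOn ℝ (Icc 0 1) φ :=
    (hf.comp_affineMap _).subset (fun _ hs => hf.1.lineMap_mem ha hb hs) (convex_Icc 0 1)
  have hderiv : HasDerivAt φ ⟪g, b - a⟫ 0 := by
    simpa using hg.hasFDerivAt.comp_hasDerivAt_of_eq (0 : ℝ) AffineMap.hasDerivAt_lineMap (by simp)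
  simpa [φ, slope] using hline.le_slope_of_hasDerivAt (by simp) (by simp) zero_lt_one hderiv

namespace LSmoothOn

variable {C : Set E} {f : E → ℝ} {g : E → E} {L : ℝ}

theorem nonneg (hL : LSmoothOn C f g L) (hf : ConvexOn ℝ C f)
    (hg : ∀ x ∈ C, HasGradientAt f (g x) x) (hC : C.Nontrivial) : 0 ≤ L := by
  obtain ⟨a, ha, b, hb, hab⟩ := hC
  have hupper := hL a ha b hb
  have hlower := hf.inner_gradient_le_sub ha hb (hg a ha)
  have hpos : 0 < ‖b - a‖ ^ 2 := by positivity [sub_ne_zero.2 hab.symm]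
  nlinarith

theorem frankWolfe_step_le (hL : LSmoothOn C f g L) (hL0 : 0 ≤ L) (hf : ConvexOn ℝ C f)
    {x v y : E} {s D : ℝ} (hx : x ∈ C) (hv : v ∈ C) (hy : y ∈ C) (hgx : HasGradientAt f (g x) x)
    (hvy : ⟪g x, v⟫ ≤ ⟪g x, y⟫) (hs : s ∈ Icc (0 : ℝ) 1) (hD : ‖v - x‖ ≤ D) :
    f (x + s • (v - x)) - f y ≤ (1 - s) * (f x - f y) + s ^ 2 * (L * D ^ 2 / 2) := by
  have hupper := hL x hx _ (hf.1.add_smul_sub_mem hx hv hs)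
  rw [add_sub_cancel_left, real_inner_smul_right, norm_smul, Real.norm_of_nonneg hs.1] at hupper
  have hgap : ⟪g x, v - x⟫ ≤ f y - f x := by
    have := hf.inner_gradient_le_sub hx hy hgx
    rw [inner_sub_right] at this ⊢
    linarith
  have hsq : ‖v - x‖ ^ 2 ≤ D ^ 2 := pow_le_pow_left₀ (norm_nonneg _) hD 2
  nlinarith [mul_le_mul_of_nonneg_left hgap hs.1, mul_le_mul_of_nonneg_left hsq (sq_nonneg s)]

end LSmoothOn

theorem le_four_mul_div_of_forall_le_one_sub_mul_add_sq_mul {h : ℕ → ℝ} {M : ℝ} (hM : 0 ≤ M)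
    (hstep : ∀ t, ∀ s ∈ Icc (0 : ℝ) 1, h (t + 1) ≤ (1 - s) * h t + s ^ 2 * M) :
    ∀ t, 1 ≤ t → h t ≤ 4 * M / (t + 2) := by
  refine Nat.le_induction ?_ fun t ht ih => ?_
  · have := hstep 0 1 (by simp)
    norm_num at this ⊢
    linarith
  · have ht' : (1 : ℝ) ≤ t := by exact_mod_cast ht
    have hs : 2 / ((t : ℝ) + 2) ∈ Icc (0 : ℝ) 1 :=
      ⟨by positivity, (div_le_one (by positivity)).2 (by linarith)⟩
    have hcoef : 0 ≤ 1 - 2 / ((t : ℝ) + 2) := sub_nonneg.2 hs.2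
    calc h (t + 1) ≤ (1 - 2 / ((t : ℝ) + 2)) * h t + (2 / ((t : ℝ) + 2)) ^ 2 * M := hstep t _ hs
      _ ≤ (1 - 2 / ((t : ℝ) + 2)) * (4 * M / (t + 2)) + (2 / ((t : ℝ) + 2)) ^ 2 * M := by
        gcongr
      _ = 4 * M * (t + 1) / (t + 2) ^ 2 := by field_simp; ring
      _ ≤ 4 * M / ((t + 1 : ℕ) + 2) := by
        push_cast
        rw [div_le_div_iff₀ (by positivity) (by positivity)]
        nlinarith

theorem fw_line_search_sublinear_convergence_general
    (n : ℕ) (C : Set (EuclideanSpace ℝ (Fin n)))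
    (hCcomp : IsCompact C) (hCconv : Convex ℝ C)
    (δ : ℝ) (hδ : 0 < δ) (hdiam : Metric.diam C = δ)
    (f : EuclideanSpace ℝ (Fin n) → ℝ)
    (g : EuclideanSpace ℝ (Fin n) → EuclideanSpace ℝ (Fin n))
    (L : ℝ)
    (hconv : ConvexOn ℝ C f)
    (hgrad : ∀ x ∈ C, HasGradientAt f (g x) x)
    (hsmooth : ∀ x ∈ C, ∀ y ∈ C,
      f y ≤ f x + ⟪g x, y - x⟫ + L / 2 * ‖y - x‖ ^ 2)
    (x v : ℕ → EuclideanSpace ℝ (Fin n)) (η : ℕ → ℝ)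
    (hx0 : x 0 ∈ C)
    (hvC : ∀ t, v t ∈ C)
    (hvmin : ∀ t, ∀ u ∈ C, ⟪g (x t), v t⟫ ≤ ⟪g (x t), u⟫)
    (hη : ∀ t, η t ∈ Set.Icc (0 : ℝ) 1)
    (hls : ∀ t, ∀ η' ∈ Set.Icc (0 : ℝ) 1,
      f (x t + η t • (v t - x t)) ≤ f (x t + η' • (v t - x t)))
    (hupdate : ∀ t, x (t + 1) = x t + η t • (v t - x t)) :
    ∀ t : ℕ, 1 ≤ t → ∀ y ∈ C, f (x t) - f y ≤ 2 * L * δ ^ 2 / ((t : ℝ) + 2) := by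
  have hxC : ∀ t, x t ∈ C := fun t =>
    Nat.rec hx0 (fun t ih => hupdate t ▸ hCconv.add_smul_sub_mem ih (hvC t) (hη t)) t
  have hC : C.Nontrivial := C.subsingleton_or_nontrivial.resolve_left fun h =>
    hδ.ne' (hdiam ▸ Metric.diam_subsingleton h)
  have hL : 0 ≤ L := LSmoothOn.nonneg hsmooth hconv hgrad hC
  have hvx : ∀ t, ‖v t - x t‖ ≤ δ := fun t => by
    simpa [hdiam, dist_eq_norm] using Metric.dist_le_diam_of_mem hCcomp.isBounded (hvC t) (hxC t)
  intro t ht y hy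
  have hstep : ∀ t, ∀ s ∈ Icc (0 : ℝ) 1,
      f (x (t + 1)) - f y ≤ (1 - s) * (f (x t) - f y) + s ^ 2 * (L * δ ^ 2 / 2) := fun t s hs => by
    grw [hupdate t, hls t s hs]
    exact LSmoothOn.frankWolfe_step_le hsmooth hL hconv (hxC t) (hvC t) hy (hgrad _ (hxC t))
      (hvmin t y hy) hs (hvx t)
  calc f (x t) - f y ≤ 4 * (L * δ ^ 2 / 2) / ((t : ℝ) + 2) :=
        le_four_mul_div_of_forall_le_one_sub_mul_add_sq_mul (h := fun t => f (x t) - f y)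
          (by positivity) hstep t ht
    _ = 2 * L * δ ^ 2 / ((t : ℝ) + 2) := by ring

/-- Sublinear convergence of the Frank-Wolfe algorithm with line-search. -/
theorem fw_line_search_sublinear_convergence
    (n : ℕ) (C : Set (EuclideanSpace ℝ (Fin n)))
    (hCne : C.Nonempty) (hCcomp : IsCompact C) (hCconv : Convex ℝ C)
    (δ : ℝ) (hδ : 0 < δ) (hdiam : Metric.diam C = δ)
    (f : EuclideanSpace ℝ (Fin n) → ℝ)
    (g : EuclideanSpace ℝ (Fin n) → EuclideanSpace ℝ (Fin n))
    (L : ℝ)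
    (hconv : ConvexOn ℝ C f)
    (hgrad : ∀ x ∈ C, HasGradientAt f (g x) x)
    (hsmooth : ∀ x ∈ C, ∀ y ∈ C,
      f y ≤ f x + ⟪g x, y - x⟫ + L / 2 * ‖y - x‖ ^ 2)
    (x v : ℕ → EuclideanSpace ℝ (Fin n)) (η : ℕ → ℝ)
    (hx0 : x 0 ∈ C)
    (hvC : ∀ t, v t ∈ C)
    (hvmin : ∀ t, ∀ u ∈ C, ⟪g (x t), v t⟫ ≤ ⟪g (x t), u⟫)
    (hη : ∀ t, η t ∈ Set.Icc (0 : ℝ) 1)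
    (hls : ∀ t, ∀ η' ∈ Set.Icc (0 : ℝ) 1,
      f (x t + η t • (v t - x t)) ≤ f (x t + η' • (v t - x t)))
    (hupdate : ∀ t, x (t + 1) = x t + η t • (v t - x t)) :
    ∀ t : ℕ, 1 ≤ t → ∀ y ∈ C, f (x t) - f y ≤ 2 * L * δ ^ 2 / ((t : ℝ) + 2) :=
  fw_line_search_sublinear_convergence_general n C hCcomp hCconv δ hδ hdiam f g L hconv hgrad
    hsmooth x v η hx0 hvC hvmin hη hls hupdate
end

section
/- Let C ⊆ ℝ^n be a nonempty compact convex set of diameter δ > 0 with set of extreme points V, and let f : ℝ^n → ℝ be convex, differentiable, and L-smooth on C. Let (α^t, S^t, x^t)_{t≥0} be an away-step Frank-Wolfe (AFW) sequence with line-search as defined in the context, started from α^0 the indicator weight of a single extreme point x^0 ∈ V. Then for every t ≥ 1, f(x^t) − min_{x∈C} f(x) ≤ 4Lδ²/t. -/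
/-!
Write `h t = f (x t) - f y` and `D = L * δ ^ 2`. The step `0` is always admissible in the line
search, so `h` is antitone, and by convexity `h t` is at most the Frank-Wolfe gap
`⟪g (x t), x t - v t⟫`, so `f` decreases with slope at least `h t` along the chosen direction.
A Frank-Wolfe step, or an away step whose line search stops strictly before the maximal step
`α t (a t) / (1 - α t (a t))`, is a good step: smoothness along the search segment gives
`h (t + 1) ≤ D / 2` if `D ≤ h t`, and `h (t + 1) ≤ h t - h t ^ 2 / (2 * D)` otherwise, which
preserves `h t * #(good steps before t) ≤ 2 * D`. The remaining steps are drop steps, which remove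
an atom from the active set. Only good steps add atoms and the active set starts with a single
atom, so there are at most as many drop steps as good steps; hence `t ≤ 2 * #(good steps)` and
`h t * t ≤ 4 * D`.
-/

open RealInnerProductSpace Classical
open Set Function Finset

def SufficientDecrease (D h h' : ℝ) : Prop :=
  (D ≤ h ∧ 2 * h' ≤ D) ∨ (0 < D ∧ 2 * D * h' ≤ 2 * D * h - h ^ 2)

theorem SufficientDecrease.mul_succ_le {D h h' G : ℝ} (hD : 0 ≤ D) (hG : 0 ≤ G)
    (hdec : SufficientDecrease D h h') (hhG : h * G ≤ 2 * D) : h' * (G + 1) ≤ 2 * D := by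
  rcases hdec with ⟨hh, hh'⟩ | ⟨hD, hh'⟩
  · nlinarith
  · rcases le_or_gt h (2 * D) with hh | hh
    · have : 0 ≤ (2 * D - h * G) * (2 * D - h) :=
        mul_nonneg (sub_nonneg.2 hhG) (sub_nonneg.2 hh)
      nlinarith
    · nlinarith

theorem sufficientDecrease_of_forall_le {D h h' : ℝ} (hh : 0 ≤ h)
    (H : ∀ γ ∈ Icc (0 : ℝ) 1, h' ≤ h - γ * h + γ ^ 2 * (D / 2)) :
    SufficientDecrease D h h' := by
  rcases le_or_gt D h with hDh | hDh
  · exact Or.inl ⟨hDh, by linarith [H 1 ⟨zero_le_one, le_rfl⟩]⟩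
  · have hD : 0 < D := hh.trans_lt hDh
    refine Or.inr ⟨hD, ?_⟩
    have := H (h / D) ⟨by positivity, (div_le_one hD).2 hDh.le⟩
    have e : h - h / D * h + (h / D) ^ 2 * (D / 2) = h - h ^ 2 / (2 * D) := by
      field_simp; ring
    have : 2 * D * h' ≤ 2 * D * (h - h ^ 2 / (2 * D)) := by rw [← e]; gcongr
    rwa [mul_sub, mul_div_cancel₀ _ (by positivity)] at this

section LineSearch

variable {φ φ' : ℝ → ℝ} {K D M η m : ℝ}

theorem sufficientDecrease_of_isMinOn_Icc_one (hKD : K ≤ D)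
    (hφ : ∀ r ∈ Icc (0 : ℝ) 1, φ r ≤ φ 0 + r * φ' 0 + K / 2 * r ^ 2)
    (hmin : IsMinOn φ (Icc 0 1) η) (hm : m ≤ φ 0) (hslope : φ' 0 ≤ -(φ 0 - m)) :
    SufficientDecrease D (φ 0 - m) (φ η - m) := by
  refine sufficientDecrease_of_forall_le (sub_nonneg.2 hm) fun γ hγ => ?_
  have := (hmin hγ).trans (hφ γ hγ)
  nlinarith [mul_le_mul_of_nonneg_left hslope hγ.1, sq_nonneg γ]

theorem neg_le_mul_of_isMinOn_Icc (hK : 0 ≤ K)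
    (hφ : ∀ s ∈ Icc 0 M, ∀ r ∈ Icc 0 M, φ r ≤ φ s + (r - s) * φ' s + K / 2 * (r - s) ^ 2)
    (hη : η ∈ Ico 0 M) (hmin : IsMinOn φ (Icc 0 M) η) : -φ' 0 ≤ K * M := by
  have h0 : (0 : ℝ) ∈ Icc 0 M := ⟨le_rfl, hη.1.trans hη.2.le⟩
  have hM : M ∈ Icc 0 M := ⟨h0.2, le_rfl⟩
  have hη' : η ∈ Icc 0 M := Ico_subset_Icc_self hη
  -- Comparing with the endpoint `M` bounds `φ' η` from below; smoothness between `0` and `η`,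
  -- used in both directions, bounds it by `φ' 0 + K * η` from above.
  have hright : -(K / 2 * (M - η)) ≤ φ' η := by
    have := (hmin hM).trans (hφ η hη' M hM)
    have : 0 < M - η := sub_pos.2 hη.2
    nlinarith
  have hleft : η * φ' η ≤ η * φ' 0 + K * η ^ 2 := by
    nlinarith [hφ 0 h0 η hη', hφ η hη' 0 h0]
  rcases hη.1.eq_or_lt with rfl | hηpos
  · nlinarith [mul_nonneg hK hM.1]
  · have : φ' η ≤ φ' 0 + K * η := le_of_mul_le_mul_left (by linarith) hηpos
    nlinarith [mul_nonneg hK (sub_nonneg.2 hη.2.le)]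

theorem sufficientDecrease_of_isMinOn_Icc (hK : 0 ≤ K) (hKD : K ≤ D)
    (hφ : ∀ s ∈ Icc 0 M, ∀ r ∈ Icc 0 M, φ r ≤ φ s + (r - s) * φ' s + K / 2 * (r - s) ^ 2)
    (hη : η ∈ Ico 0 M) (hmin : IsMinOn φ (Icc 0 M) η) (hm : m < φ 0)
    (hslope : φ' 0 ≤ -(φ 0 - m)) :
    SufficientDecrease D (φ 0 - m) (φ η - m) := by
  set h := φ 0 - m
  have hh : 0 < h := sub_pos.2 hm
  have hhK : h ≤ K * M := by linarith [neg_le_mul_of_isMinOn_Icc hK hφ hη hmin]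
  have hKpos : 0 < K := hK.lt_of_ne fun hK0 => by rw [← hK0, zero_mul] at hhK; linarith
  have hγ : h / K ∈ Icc 0 M := ⟨by positivity, (div_le_iff₀' hKpos).2 hhK⟩
  have h0 : (0 : ℝ) ∈ Icc 0 M := ⟨le_rfl, hγ.1.trans hγ.2⟩
  have hdec : φ η ≤ φ 0 - h ^ 2 / (2 * K) := by
    have := (hmin hγ).trans (hφ 0 h0 _ hγ)
    have e : φ 0 - h / K * h + K / 2 * (h / K) ^ 2 = φ 0 - h ^ 2 / (2 * K) := by
      field_simp; ring
    nlinarith [mul_le_mul_of_nonneg_left hslope hγ.1]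
  refine Or.inr ⟨hKpos.trans_le hKD, ?_⟩
  have : h ^ 2 ≤ D * (h ^ 2 / K) := by
    rw [mul_div_assoc', le_div_iff₀ hKpos]; nlinarith [sq_nonneg h]
  have : 2 * D * (h ^ 2 / (2 * K)) = D * (h ^ 2 / K) := by field_simp
  nlinarith

end LineSearch

theorem card_filter_lt_le_card_filter_le {N : ℕ → ℕ} {t : ℕ} (hN : N 0 ≤ N t)
    (hstep : ∀ k < t, N (k + 1) ≤ N k + 1) :
    #{k ∈ range t | N (k + 1) < N k} ≤ #{k ∈ range t | N k ≤ N (k + 1)} := by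
  suffices ∀ s ≤ t, N s + #{k ∈ range s | N (k + 1) < N k}
      ≤ N 0 + #{k ∈ range s | N k ≤ N (k + 1)} by
    have := this t le_rfl; omega
  intro s hs
  induction s with
  | zero => simp
  | succ s ih =>
    have := ih (by omega)
    have := hstep s hs
    rw [range_add_one, filter_insert, filter_insert]
    split_ifs <;> (try rw [card_insert_of_notMem (by simp)]) <;> omega

theorem mul_card_filter_le {D : ℝ} {h : ℕ → ℝ} {P : ℕ → Prop} [DecidablePred P] {t : ℕ}
    (hD : 0 ≤ D) (hanti : Antitone h)
    (hP : ∀ k < t, P k → SufficientDecrease D (h k) (h (k + 1))) :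
    h t * #{k ∈ range t | P k} ≤ 2 * D := by
  induction t with
  | zero => simpa using hD
  | succ t ih =>
    have ih := ih fun k hk => hP k (by omega)
    rw [range_add_one, filter_insert]
    split_ifs with hPt
    · rw [card_insert_of_notMem (by simp), Nat.cast_add_one]
      exact (hP t t.lt_succ_self hPt).mul_succ_le hD (by positivity) ih
    · exact (mul_le_mul_of_nonneg_right (hanti t.le_succ) (by positivity)).trans ih

theorem mul_le_of_sufficientDecrease {D : ℝ} {h : ℕ → ℝ} {N : ℕ → ℕ} {t : ℕ} (hD : 0 ≤ D)
    (hanti : Antitone h) (hN : N 0 ≤ N t) (hN_succ : ∀ k < t, N (k + 1) ≤ N k + 1)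
    (hstep : ∀ k < t, 0 < h k → N k ≤ N (k + 1) → SufficientDecrease D (h k) (h (k + 1))) :
    h t * t ≤ 4 * D := by
  rcases le_or_gt (h t) 0 with hneg | hpos
  · nlinarith [t.cast_nonneg (α := ℝ)]
  have hgood := mul_card_filter_le (P := fun k => N k ≤ N (k + 1)) hD hanti
    fun k hk => hstep k hk (hpos.trans_le (hanti hk.le))
  have hcount : t ≤ 2 * #{k ∈ range t | N k ≤ N (k + 1)} := by
    have hsplit := card_filter_add_card_filter_not (s := range t) (fun k => N (k + 1) < N k)
    simp only [not_lt, card_range] at hsplit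
    have := card_filter_lt_le_card_filter_le hN hN_succ
    omega
  have : (t : ℝ) ≤ 2 * #{k ∈ range t | N k ≤ N (k + 1)} := by exact_mod_cast hcount
  nlinarith

section Weights

variable {E : Type*} [DecidableEq E] {w : E → ℝ}

theorem support_mul_add_mul_ite_subset (p q : ℝ) (b : E) :
    support (fun u => p * w u + q * if u = b then 1 else 0) ⊆ insert b (support w) := by
  intro u hu
  by_cases hub : u = b
  · exact .inl hub
  · exact .inr fun h => hu (by simp [h, hub])

theorem finsum_mul_add_mul_ite (hw : (support w).Finite) (p q : ℝ) (b : E) :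
    ∑ᶠ u, (p * w u + q * if u = b then 1 else 0) = p * ∑ᶠ u, w u + q := by
  have hs : insert b (support w) ⊆ ↑(insert b hw.toFinset) := by
    rw [Finset.coe_insert, Set.Finite.coe_toFinset]
  rw [finsum_eq_sum_of_support_subset _ ((support_mul_add_mul_ite_subset p q b).trans hs),
    finsum_eq_sum_of_support_subset _ ((subset_insert _ _).trans hs)]
  simp only [Finset.sum_add_distrib, ← Finset.mul_sum, mul_ite, mul_one, mul_zero,
    Finset.sum_ite_eq', Finset.mem_insert_self, if_true]

theorem apply_eq_zero_of_finsum_eq_one (h0 : ∀ u, 0 ≤ w u) (h1 : ∑ᶠ u, w u = 1) {b : E}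
    (hb : w b = 1) {u : E} (hu : u ≠ b) : w u = 0 := by
  have hfin : (support w).Finite := hasFiniteSupport_of_finsum_eq_one h1
  refine le_antisymm ?_ (h0 u)
  calc w u = 1 * w u + -1 * (if u = b then 1 else 0) := by simp [hu]
    _ ≤ ∑ᶠ v, (1 * w v + -1 * if v = b then 1 else 0) :=
      single_le_finsum u ((hfin.insert b).subset (support_mul_add_mul_ite_subset 1 (-1) b))
        fun v => by by_cases hv : v = b <;> simp [hv, hb, h0 v]
    _ = 0 := by rw [finsum_mul_add_mul_ite hfin, h1]; ring

variable [AddCommGroup E] [Module ℝ E]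

theorem finsum_mul_add_mul_ite_smul (hw : (support w).Finite) (p q : ℝ) (b : E) :
    ∑ᶠ u, (p * w u + q * if u = b then 1 else 0) • u = p • ∑ᶠ u, w u • u + q • b := by
  have hs : insert b (support w) ⊆ ↑(insert b hw.toFinset) := by
    rw [Finset.coe_insert, Set.Finite.coe_toFinset]
  have hsmul {c : E → ℝ} {s : Set E} (hc : support c ⊆ s) : support (fun u => c u • u) ⊆ s :=
    fun u hu => hc fun h => hu (by simp [h])
  rw [finsum_eq_sum_of_support_subset _
      (hsmul ((support_mul_add_mul_ite_subset p q b).trans hs)),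
    finsum_eq_sum_of_support_subset _ (hsmul ((subset_insert _ _).trans hs))]
  simp [add_smul, mul_smul, Finset.sum_add_distrib, Finset.smul_sum]

theorem finsum_smul_eq_of_apply_eq_one (h0 : ∀ u, 0 ≤ w u) (h1 : ∑ᶠ u, w u = 1) {b : E}
    (hb : w b = 1) : ∑ᶠ u, w u • u = b := by
  rw [finsum_eq_single _ b fun u hu => by
    rw [apply_eq_zero_of_finsum_eq_one h0 h1 hb hu, zero_smul], hb, one_smul]

end Weights

section Smooth

variable {E : Type*} [NormedAddCommGroup E] [InnerProductSpace ℝ E] {C : Set E} {f : E → ℝ}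

theorem ConvexOn.add_inner_le [CompleteSpace E] {g p q : E} (hf : ConvexOn ℝ C f)
    (hg : HasGradientAt f g p) (hp : p ∈ C) (hq : q ∈ C) : f p + ⟪g, q - p⟫ ≤ f q := by
  have hconv : ConvexOn ℝ (AffineMap.lineMap p q ⁻¹' C) (f ∘ AffineMap.lineMap p q) :=
    hf.comp_affineMap _
  have hderiv : HasDerivAt (f ∘ AffineMap.lineMap (k := ℝ) p q) ⟪g, q - p⟫ 0 := by
    have := hg.hasFDerivAt
    rw [← AffineMap.lineMap_apply_zero p q (k := ℝ)] at this
    simpa using this.comp_hasDerivAt 0 AffineMap.hasDerivAt_lineMap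
  have := hconv.le_slope_of_hasDerivAt (by simpa using hp) (by simpa using hq) zero_lt_one hderiv
  simp only [slope_def_field, comp_apply, AffineMap.lineMap_apply_one,
    AffineMap.lineMap_apply_zero, sub_zero, div_one] at this
  linarith

variable {g : E → E} {L : ℝ}

theorem nonneg_of_smooth_of_convexOn [CompleteSpace E] (hC : C.Nontrivial)
    (hf : ConvexOn ℝ C f) (hg : ∀ p ∈ C, HasGradientAt f (g p) p)
    (hsmooth : ∀ p ∈ C, ∀ q ∈ C, f q ≤ f p + ⟪g p, q - p⟫ + L / 2 * ‖q - p‖ ^ 2) : 0 ≤ L := by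
  obtain ⟨p, hp, q, hq, hpq⟩ := hC
  have := hf.add_inner_le (hg p hp) hp hq
  have := hsmooth p hp q hq
  have : 0 < ‖q - p‖ ^ 2 := pow_pos (norm_pos_iff.2 (sub_ne_zero.2 hpq.symm)) 2
  nlinarith

theorem le_add_inner_add_sq_of_smooth
    (hsmooth : ∀ p ∈ C, ∀ q ∈ C, f q ≤ f p + ⟪g p, q - p⟫ + L / 2 * ‖q - p‖ ^ 2)
    {x d : E} {s r : ℝ} (hs : x + s • d ∈ C) (hr : x + r • d ∈ C) :
    f (x + r • d) ≤ f (x + s • d) + (r - s) * ⟪g (x + s • d), d⟫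
      + L * ‖d‖ ^ 2 / 2 * (r - s) ^ 2 := by
  have hdiff : x + r • d - (x + s • d) = (r - s) • d := by module
  have := hsmooth _ hs _ hr
  rw [hdiff, inner_smul_right, norm_smul, mul_pow, Real.norm_eq_abs, sq_abs] at this
  linarith

end Smooth

variable {E : Type*} [NormedAddCommGroup E] [InnerProductSpace ℝ E] [DecidableEq E]

structure IsAFWSequence (C : Set E) (f : E → ℝ) (g : E → E) (α : ℕ → E → ℝ) (x a v : ℕ → E)
    (η : ℕ → ℝ) : Prop where
  weight_nonneg : ∀ t u, 0 ≤ α t u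
  mem_of_weight_ne_zero : ∀ t u, α t u ≠ 0 → u ∈ C
  finsum_weight : ∀ t, ∑ᶠ u, α t u = 1
  x_eq : ∀ t, x t = ∑ᶠ u, α t u • u
  weight_away_ne_zero : ∀ t, α t (a t) ≠ 0
  fw_mem : ∀ t, v t ∈ C
  fw_min : ∀ t, ∀ u ∈ C, ⟪g (x t), v t⟫ ≤ ⟪g (x t), u⟫
  away_step : ∀ t, ⟪g (x t), x t - a t⟫ ≤ ⟪g (x t), v t - x t⟫ →
      ((α t (a t) = 1 → α (t + 1) = α t) ∧
       (α t (a t) ≠ 1 →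
         η t ∈ Icc (0 : ℝ) (α t (a t) / (1 - α t (a t))) ∧
         (∀ η' ∈ Icc (0 : ℝ) (α t (a t) / (1 - α t (a t))),
           f (x t + η t • (x t - a t)) ≤ f (x t + η' • (x t - a t))) ∧
         α (t + 1) = fun u =>
           (1 + η t) * α t u - η t * (if u = a t then 1 else 0)))
  fw_step : ∀ t, ¬ ⟪g (x t), x t - a t⟫ ≤ ⟪g (x t), v t - x t⟫ →
      η t ∈ Icc (0 : ℝ) 1 ∧
      (∀ η' ∈ Icc (0 : ℝ) 1,
        f (x t + η t • (v t - x t)) ≤ f (x t + η' • (v t - x t))) ∧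
      α (t + 1) = fun u =>
        (1 - η t) * α t u + η t * (if u = v t then 1 else 0)

namespace IsAFWSequence

variable {C : Set E} {f : E → ℝ} {g : E → E} {α : ℕ → E → ℝ} {x a v : ℕ → E} {η : ℕ → ℝ}

theorem finite_support (hs : IsAFWSequence C f g α x a v η) (t : ℕ) : (support (α t)).Finite :=
  hasFiniteSupport_of_finsum_eq_one (hs.finsum_weight t)

theorem weight_le_one (hs : IsAFWSequence C f g α x a v η) (t : ℕ) (u : E) : α t u ≤ 1 :=
  hs.finsum_weight t ▸ single_le_finsum u (hs.finite_support t) (hs.weight_nonneg t)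

theorem x_mem (hs : IsAFWSequence C f g α x a v η) (hC : Convex ℝ C) (t : ℕ) : x t ∈ C :=
  hs.x_eq t ▸ hC.finsum_mem (hs.weight_nonneg t) (hs.finsum_weight t) (hs.mem_of_weight_ne_zero t)

theorem x_eq_away_of_weight_eq_one (hs : IsAFWSequence C f g α x a v η) {t : ℕ}
    (h : α t (a t) = 1) : x t = a t :=
  (hs.x_eq t).trans (finsum_smul_eq_of_apply_eq_one (hs.weight_nonneg t) (hs.finsum_weight t) h)

theorem finsum_away_smul (hs : IsAFWSequence C f g α x a v η) (t : ℕ) (γ : ℝ) :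
    ∑ᶠ u, ((1 + γ) * α t u - γ * if u = a t then 1 else 0) • u = x t + γ • (x t - a t) := by
  simp_rw [sub_eq_add_neg, ← neg_mul]
  rw [finsum_mul_add_mul_ite_smul (hs.finite_support t), ← hs.x_eq]
  module

theorem finsum_away (hs : IsAFWSequence C f g α x a v η) (t : ℕ) (γ : ℝ) :
    ∑ᶠ u, ((1 + γ) * α t u - γ * if u = a t then 1 else 0) = 1 := by
  simp_rw [sub_eq_add_neg, ← neg_mul]
  rw [finsum_mul_add_mul_ite (hs.finite_support t), hs.finsum_weight]
  ring

theorem add_smul_sub_away_mem (hs : IsAFWSequence C f g α x a v η) (hC : Convex ℝ C) {t : ℕ}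
    (hne : α t (a t) ≠ 1) {γ : ℝ} (hγ : γ ∈ Icc 0 (α t (a t) / (1 - α t (a t)))) :
    x t + γ • (x t - a t) ∈ C := by
  have hlt : 0 < 1 - α t (a t) := sub_pos.2 ((hs.weight_le_one t (a t)).lt_of_ne hne)
  have hγa : γ * (1 - α t (a t)) ≤ α t (a t) := (le_div_iff₀ hlt).1 hγ.2
  rw [← hs.finsum_away_smul t γ]
  refine hC.finsum_mem (fun u => ?_) (hs.finsum_away t γ) fun u hu => ?_
  · by_cases hu : u = a t
    · subst hu; simp only [if_true]; linarith
    · simp only [hu, if_false]; nlinarith [hs.weight_nonneg t u, hγ.1]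
  · by_cases hua : u = a t
    · exact hua ▸ hs.mem_of_weight_ne_zero t _ (hs.weight_away_ne_zero t)
    · exact hs.mem_of_weight_ne_zero t u fun h => hu (by simp [h, hua])

theorem x_succ_of_away (hs : IsAFWSequence C f g α x a v η) {t : ℕ}
    (hcond : ⟪g (x t), x t - a t⟫ ≤ ⟪g (x t), v t - x t⟫) (hne : α t (a t) ≠ 1) :
    x (t + 1) = x t + η t • (x t - a t) := by
  rw [hs.x_eq, ((hs.away_step t hcond).2 hne).2.2, hs.finsum_away_smul]

theorem x_succ_of_fw (hs : IsAFWSequence C f g α x a v η) {t : ℕ}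
    (hcond : ¬ ⟪g (x t), x t - a t⟫ ≤ ⟪g (x t), v t - x t⟫) :
    x (t + 1) = x t + η t • (v t - x t) := by
  rw [hs.x_eq, (hs.fw_step t hcond).2.2, finsum_mul_add_mul_ite_smul (hs.finite_support t),
    ← hs.x_eq]
  module

theorem f_antitone (hs : IsAFWSequence C f g α x a v η) : Antitone fun t => f (x t) := by
  refine antitone_nat_of_succ_le fun t => ?_
  by_cases hcond : ⟪g (x t), x t - a t⟫ ≤ ⟪g (x t), v t - x t⟫
  · by_cases hone : α t (a t) = 1
    · rw [hs.x_eq, hs.x_eq, (hs.away_step t hcond).1 hone]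
    · have hmax : 0 ≤ α t (a t) / (1 - α t (a t)) :=
        div_nonneg (hs.weight_nonneg t _) (sub_nonneg.2 (hs.weight_le_one t _))
      simpa [hs.x_succ_of_away hcond hone] using
        ((hs.away_step t hcond).2 hone).2.1 0 ⟨le_rfl, hmax⟩
  · simpa [hs.x_succ_of_fw hcond] using (hs.fw_step t hcond).2.1 0 ⟨le_rfl, zero_le_one⟩

theorem support_succ_subset_of_away (hs : IsAFWSequence C f g α x a v η) {t : ℕ}
    (hcond : ⟪g (x t), x t - a t⟫ ≤ ⟪g (x t), v t - x t⟫) (hne : α t (a t) ≠ 1) :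
    support (α (t + 1)) ⊆ support (α t) := by
  rw [((hs.away_step t hcond).2 hne).2.2]
  simp_rw [sub_eq_add_neg, ← neg_mul]
  exact (support_mul_add_mul_ite_subset _ _ _).trans
    (insert_subset (hs.weight_away_ne_zero t) subset_rfl)

theorem ncard_support_succ_le (hs : IsAFWSequence C f g α x a v η) (t : ℕ) :
    (support (α (t + 1))).ncard ≤ (support (α t)).ncard + 1 := by
  by_cases hcond : ⟪g (x t), x t - a t⟫ ≤ ⟪g (x t), v t - x t⟫
  · by_cases hone : α t (a t) = 1
    · rw [(hs.away_step t hcond).1 hone]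
      omega
    · exact (ncard_le_ncard (hs.support_succ_subset_of_away hcond hone)
        (hs.finite_support t)).trans (Nat.le_succ _)
  · rw [(hs.fw_step t hcond).2.2]
    exact (ncard_le_ncard (support_mul_add_mul_ite_subset _ _ _)
      ((hs.finite_support t).insert _)).trans (ncard_insert_le _ _)

theorem ncard_support_succ_lt_of_drop (hs : IsAFWSequence C f g α x a v η) {t : ℕ}
    (hcond : ⟪g (x t), x t - a t⟫ ≤ ⟪g (x t), v t - x t⟫) (hne : α t (a t) ≠ 1)
    (hdrop : η t = α t (a t) / (1 - α t (a t))) :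
    (support (α (t + 1))).ncard < (support (α t)).ncard := by
  have hzero : α (t + 1) (a t) = 0 := by
    have : 1 - α t (a t) ≠ 0 := sub_ne_zero.2 (Ne.symm hne)
    rw [((hs.away_step t hcond).2 hne).2.2, hdrop]
    simp only [if_true]
    field_simp
    ring
  calc (support (α (t + 1))).ncard ≤ (support (α t) \ {a t}).ncard :=
        ncard_le_ncard (subset_sdiff_singleton (hs.support_succ_subset_of_away hcond hne)
          (notMem_support.2 hzero)) (hs.finite_support t).sdiff
    _ < (support (α t)).ncard :=
        ncard_sdiff_singleton_lt_of_mem (hs.weight_away_ne_zero t) (hs.finite_support t)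

variable {L δ : ℝ}

theorem sufficientDecrease_of_fw (hs : IsAFWSequence C f g α x a v η) (hC : Convex ℝ C)
    (hsmooth : ∀ p ∈ C, ∀ q ∈ C, f q ≤ f p + ⟪g p, q - p⟫ + L / 2 * ‖q - p‖ ^ 2)
    (hL : 0 ≤ L) (hδ : ∀ p ∈ C, ∀ q ∈ C, ‖p - q‖ ≤ δ)
    {t : ℕ} (hcond : ¬ ⟪g (x t), x t - a t⟫ ≤ ⟪g (x t), v t - x t⟫) {m : ℝ} (hm : m ≤ f (x t))
    (hslope : ⟪g (x t), v t - x t⟫ ≤ -(f (x t) - m)) :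
    SufficientDecrease (L * δ ^ 2) (f (x t) - m) (f (x (t + 1)) - m) := by
  have hx := hs.x_mem hC t
  have hseg (r : ℝ) (hr : r ∈ Icc (0 : ℝ) 1) : x t + r • (v t - x t) ∈ C :=
    hC.add_smul_sub_mem hx (hs.fw_mem t) hr
  have hK : L * ‖v t - x t‖ ^ 2 ≤ L * δ ^ 2 := by
    gcongr; exact hδ _ (hs.fw_mem t) _ hx
  have := sufficientDecrease_of_isMinOn_Icc_one (φ := fun r => f (x t + r • (v t - x t)))
    (φ' := fun r => ⟪g (x t + r • (v t - x t)), v t - x t⟫) hK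
    (fun r hr => by
      simpa using le_add_inner_add_sq_of_smooth hsmooth (s := 0) (by simpa using hx) (hseg r hr))
    (hs.fw_step t hcond).2.1 (by simpa using hm) (by simpa using hslope)
  simpa [hs.x_succ_of_fw hcond] using this

theorem sufficientDecrease_of_away (hs : IsAFWSequence C f g α x a v η) (hC : Convex ℝ C)
    (hsmooth : ∀ p ∈ C, ∀ q ∈ C, f q ≤ f p + ⟪g p, q - p⟫ + L / 2 * ‖q - p‖ ^ 2)
    (hL : 0 ≤ L) (hδ : ∀ p ∈ C, ∀ q ∈ C, ‖p - q‖ ≤ δ)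
    {t : ℕ} (hcond : ⟪g (x t), x t - a t⟫ ≤ ⟪g (x t), v t - x t⟫) (hne : α t (a t) ≠ 1)
    (hgood : η t < α t (a t) / (1 - α t (a t))) {m : ℝ} (hm : m < f (x t))
    (hslope : ⟪g (x t), x t - a t⟫ ≤ -(f (x t) - m)) :
    SufficientDecrease (L * δ ^ 2) (f (x t) - m) (f (x (t + 1)) - m) := by
  have hx := hs.x_mem hC t
  have ha : a t ∈ C := hs.mem_of_weight_ne_zero t _ (hs.weight_away_ne_zero t)
  obtain ⟨hη, hmin, -⟩ := (hs.away_step t hcond).2 hne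
  have hK : L * ‖x t - a t‖ ^ 2 ≤ L * δ ^ 2 := by
    gcongr; exact hδ _ hx _ ha
  have := sufficientDecrease_of_isMinOn_Icc (φ := fun r => f (x t + r • (x t - a t)))
    (φ' := fun r => ⟪g (x t + r • (x t - a t)), x t - a t⟫) (mul_nonneg hL (sq_nonneg _)) hK
    (fun s hs' r hr => le_add_inner_add_sq_of_smooth hsmooth
      (hs.add_smul_sub_away_mem hC hne hs') (hs.add_smul_sub_away_mem hC hne hr))
    ⟨hη.1, hgood⟩ hmin (by simpa using hm) (by simpa using hslope)
  simpa [hs.x_succ_of_away hcond hne] using this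

theorem inner_fw_sub_le [CompleteSpace E] (hs : IsAFWSequence C f g α x a v η)
    (hC : Convex ℝ C) (hf : ConvexOn ℝ C f) (hg : ∀ p ∈ C, HasGradientAt f (g p) p)
    {y : E} (hy : y ∈ C) (t : ℕ) : ⟪g (x t), v t - x t⟫ ≤ -(f (x t) - f y) := by
  have hx := hs.x_mem hC t
  have := hf.add_inner_le (hg _ hx) hx hy
  have := hs.fw_min t y hy
  rw [inner_sub_right] at *
  linarith

theorem sufficientDecrease_of_ncard_le [CompleteSpace E] (hs : IsAFWSequence C f g α x a v η)
    (hC : Convex ℝ C) (hf : ConvexOn ℝ C f) (hg : ∀ p ∈ C, HasGradientAt f (g p) p)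
    (hsmooth : ∀ p ∈ C, ∀ q ∈ C, f q ≤ f p + ⟪g p, q - p⟫ + L / 2 * ‖q - p‖ ^ 2)
    (hL : 0 ≤ L) (hδ : ∀ p ∈ C, ∀ q ∈ C, ‖p - q‖ ≤ δ)
    {y : E} (hy : y ∈ C) {t : ℕ} (hpos : f y < f (x t))
    (hN : (support (α t)).ncard ≤ (support (α (t + 1))).ncard) :
    SufficientDecrease (L * δ ^ 2) (f (x t) - f y) (f (x (t + 1)) - f y) := by
  have hslope := hs.inner_fw_sub_le hC hf hg hy t
  by_cases hcond : ⟪g (x t), x t - a t⟫ ≤ ⟪g (x t), v t - x t⟫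
  · have hne : α t (a t) ≠ 1 := fun hone => by
      rw [sub_eq_zero.2 (hs.x_eq_away_of_weight_eq_one hone), inner_zero_right] at hcond
      linarith
    have hgood : η t < α t (a t) / (1 - α t (a t)) :=
      ((hs.away_step t hcond).2 hne).1.2.lt_of_ne fun hdrop =>
        (hs.ncard_support_succ_lt_of_drop hcond hne hdrop).not_ge hN
    exact hs.sufficientDecrease_of_away hC hsmooth hL hδ hcond hne hgood hpos
      (hcond.trans hslope)
  · exact hs.sufficientDecrease_of_fw hC hsmooth hL hδ hcond hpos.le hslope

end IsAFWSequence

theorem afw_sublinear_convergence_general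
    (n : ℕ) (C : Set (EuclideanSpace ℝ (Fin n)))
    (hCcomp : IsCompact C) (hCconv : Convex ℝ C)
    (V : Set (EuclideanSpace ℝ (Fin n))) (hV : V = Set.extremePoints ℝ C)
    (δ : ℝ) (hdiam : Metric.diam C = δ)
    (f : EuclideanSpace ℝ (Fin n) → ℝ)
    (g : EuclideanSpace ℝ (Fin n) → EuclideanSpace ℝ (Fin n))
    (L : ℝ)
    (hconv : ConvexOn ℝ C f)
    (hgrad : ∀ x ∈ C, HasGradientAt f (g x) x)
    (hsmooth : ∀ x ∈ C, ∀ y ∈ C,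
      f y ≤ f x + ⟪g x, y - x⟫ + L / 2 * ‖y - x‖ ^ 2)
    -- the AFW sequence: weights `α t`, iterates `x t`, away vertices `a t`,
    -- FW vertices `v t`, step sizes `η t`
    (α : ℕ → EuclideanSpace ℝ (Fin n) → ℝ)
    (x a v : ℕ → EuclideanSpace ℝ (Fin n)) (η : ℕ → ℝ)
    (x0 : EuclideanSpace ℝ (Fin n))
    (hα0 : α 0 = fun u => if u = x0 then 1 else 0)
    (hαnn : ∀ t u, 0 ≤ α t u)
    (hαV : ∀ t u, α t u ≠ 0 → u ∈ V)
    (hαsum : ∀ t, ∑ᶠ u, α t u = 1)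
    (hx : ∀ t, x t = ∑ᶠ u, α t u • u)
    (haS : ∀ t, α t (a t) ≠ 0)
    (hvV : ∀ t, v t ∈ V)
    (hvmin : ∀ t, ∀ u ∈ C, ⟪g (x t), v t⟫ ≤ ⟪g (x t), u⟫)
    -- away step
    (haway : ∀ t, ⟪g (x t), x t - a t⟫ ≤ ⟪g (x t), v t - x t⟫ →
      ((α t (a t) = 1 → α (t + 1) = α t) ∧
       (α t (a t) ≠ 1 →
         η t ∈ Set.Icc (0 : ℝ) (α t (a t) / (1 - α t (a t))) ∧
         (∀ η' ∈ Set.Icc (0 : ℝ) (α t (a t) / (1 - α t (a t))),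
           f (x t + η t • (x t - a t)) ≤ f (x t + η' • (x t - a t))) ∧
         α (t + 1) = fun u =>
           (1 + η t) * α t u - η t * (if u = a t then 1 else 0))))
    -- FW step
    (hfw : ∀ t, ¬ ⟪g (x t), x t - a t⟫ ≤ ⟪g (x t), v t - x t⟫ →
      η t ∈ Set.Icc (0 : ℝ) 1 ∧
      (∀ η' ∈ Set.Icc (0 : ℝ) 1,
        f (x t + η t • (v t - x t)) ≤ f (x t + η' • (v t - x t))) ∧
      α (t + 1) = fun u =>
        (1 - η t) * α t u + η t * (if u = v t then 1 else 0)) :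
    ∀ t : ℕ, 1 ≤ t → ∀ y ∈ C, f (x t) - f y ≤ 4 * L * δ ^ 2 / (t : ℝ) := by
  intro t ht y hy
  have hVC : V ⊆ C := hV ▸ extremePoints_subset
  have hs : IsAFWSequence C f g α x a v η := ⟨hαnn, fun t u hu => hVC (hαV t u hu), hαsum, hx,
    haS, fun t => hVC (hvV t), hvmin, haway, hfw⟩
  rcases C.subsingleton_or_nontrivial with hsub | hnontriv
  · rw [hsub (hs.x_mem hCconv t) hy, ← hdiam, Metric.diam_subsingleton hsub]
    simp
  have hL := nonneg_of_smooth_of_convexOn hnontriv hconv hgrad hsmooth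
  have hδ : ∀ p ∈ C, ∀ q ∈ C, ‖p - q‖ ≤ δ := fun p hp q hq =>
    hdiam ▸ dist_eq_norm p q ▸ Metric.dist_le_diam_of_mem hCcomp.isBounded hp hq
  have hN : (support (α 0)).ncard ≤ (support (α t)).ncard := by
    have : support (α 0) = {x0} := by ext; simp [hα0]
    rw [this, ncard_singleton]
    exact (ncard_pos (hs.finite_support t)).2 ⟨a t, haS t⟩
  have := mul_le_of_sufficientDecrease (h := fun k => f (x k) - f y) (mul_nonneg hL (sq_nonneg δ))
    (fun j k hjk => sub_le_sub_right (hs.f_antitone hjk) _) hN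
    (fun k _ => hs.ncard_support_succ_le k) fun k _ hpos hNk =>
      hs.sufficientDecrease_of_ncard_le hCconv hconv hgrad hsmooth hL hδ hy (sub_pos.1 hpos) hNk
  rw [le_div_iff₀ (by exact_mod_cast ht)]
  linarith

/-- Sublinear convergence of the away-step Frank-Wolfe algorithm
(AFW) with line-search. -/
theorem afw_sublinear_convergence
    (n : ℕ) (C : Set (EuclideanSpace ℝ (Fin n)))
    (hCne : C.Nonempty) (hCcomp : IsCompact C) (hCconv : Convex ℝ C)
    (V : Set (EuclideanSpace ℝ (Fin n))) (hV : V = Set.extremePoints ℝ C)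
    (δ : ℝ) (hδ : 0 < δ) (hdiam : Metric.diam C = δ)
    (f : EuclideanSpace ℝ (Fin n) → ℝ)
    (g : EuclideanSpace ℝ (Fin n) → EuclideanSpace ℝ (Fin n))
    (L : ℝ)
    (hconv : ConvexOn ℝ C f)
    (hgrad : ∀ x ∈ C, HasGradientAt f (g x) x)
    (hsmooth : ∀ x ∈ C, ∀ y ∈ C,
      f y ≤ f x + ⟪g x, y - x⟫ + L / 2 * ‖y - x‖ ^ 2)
    -- the AFW sequence: weights `α t`, iterates `x t`, away vertices `a t`,
    -- FW vertices `v t`, step sizes `η t`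
    (α : ℕ → EuclideanSpace ℝ (Fin n) → ℝ)
    (x a v : ℕ → EuclideanSpace ℝ (Fin n)) (η : ℕ → ℝ)
    (x0 : EuclideanSpace ℝ (Fin n)) (hx0V : x0 ∈ V)
    (hα0 : α 0 = fun u => if u = x0 then 1 else 0)
    (hαnn : ∀ t u, 0 ≤ α t u)
    (hαV : ∀ t u, α t u ≠ 0 → u ∈ V)
    (hαfin : ∀ t, (Function.support (α t)).Finite)
    (hαsum : ∀ t, ∑ᶠ u, α t u = 1)
    (hx : ∀ t, x t = ∑ᶠ u, α t u • u)
    (haS : ∀ t, α t (a t) ≠ 0)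
    (hamax : ∀ t, ∀ u, α t u ≠ 0 → ⟪g (x t), u⟫ ≤ ⟪g (x t), a t⟫)
    (hvV : ∀ t, v t ∈ V)
    (hvmin : ∀ t, ∀ u ∈ C, ⟪g (x t), v t⟫ ≤ ⟪g (x t), u⟫)
    -- away step
    (haway : ∀ t, ⟪g (x t), x t - a t⟫ ≤ ⟪g (x t), v t - x t⟫ →
      ((α t (a t) = 1 → α (t + 1) = α t) ∧
       (α t (a t) ≠ 1 →
         η t ∈ Set.Icc (0 : ℝ) (α t (a t) / (1 - α t (a t))) ∧
         (∀ η' ∈ Set.Icc (0 : ℝ) (α t (a t) / (1 - α t (a t))),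
           f (x t + η t • (x t - a t)) ≤ f (x t + η' • (x t - a t))) ∧
         α (t + 1) = fun u =>
           (1 + η t) * α t u - η t * (if u = a t then 1 else 0))))
    -- FW step
    (hfw : ∀ t, ¬ ⟪g (x t), x t - a t⟫ ≤ ⟪g (x t), v t - x t⟫ →
      η t ∈ Set.Icc (0 : ℝ) 1 ∧
      (∀ η' ∈ Set.Icc (0 : ℝ) 1,
        f (x t + η t • (v t - x t)) ≤ f (x t + η' • (v t - x t))) ∧
      α (t + 1) = fun u =>
        (1 - η t) * α t u + η t * (if u = v t then 1 else 0)) :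
    ∀ t : ℕ, 1 ≤ t → ∀ y ∈ C, f (x t) - f y ≤ 4 * L * δ ^ 2 / (t : ℝ) :=
  afw_sublinear_convergence_general n C hCcomp hCconv V hV δ hdiam f g L hconv hgrad hsmooth α x a v
    η x0 hα0 hαnn hαV hαsum hx haS hvV hvmin haway hfw
end

section
/- Let C ⊆ ℝ^n be a nonempty compact convex set of diameter δ > 0 with set of extreme points V, and let f : ℝ^n → ℝ be convex, differentiable, and L-smooth on C. Let (α^t, S^t, x^t)_{t≥0} be a blended pairwise Frank-Wolfe (BPFW) sequence with line-search as defined in the context, started from α^0 the indicator weight of a single extreme point x^0 ∈ V. Then for every t ≥ 1, f(x^t) − min_{x∈C} f(x) ≤ 4Lδ²/t. -/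
/-!
Put `c = L δ²` and `gap t = ⟪∇f(xₜ), xₜ - vₜ⟫`; by convexity `gap t` bounds `f(xₜ) - f(y)`.
Along a direction of slope at most `-gap`, an exact line search whose range contains the short
step `min (gap / c) 1` decreases `f` by at least `descentBound c gap`, and such "good" steps force
`(f(xₜ) - f(y)) ≤ 2c / k` after `k` of them. Frank–Wolfe steps are always good. A pairwise step
that is not good is a drop step: had its line search stopped inside `[0, α(a)]`, the slope there
would be nonnegative, while smoothness keeps it below `-gap + c η < 0`. So the away vertex leaves
the active set. Every step adds at most one vertex to the active set, which starts with one and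
never becomes empty, hence at most half of the first `t` steps are drops and `k ≥ t / 2`.
-/

open RealInnerProductSpace Set Function

theorem Metric.isBounded_of_diam_pos {α : Type*} [PseudoMetricSpace α] {s : Set α}
    (h : 0 < Metric.diam s) : Bornology.IsBounded s := by
  by_contra hs
  rw [Metric.diam_eq_zero_of_unbounded hs] at h
  exact lt_irrefl 0 h

theorem Metric.nontrivial_of_diam_pos {α : Type*} [PseudoMetricSpace α] {s : Set α}
    (h : 0 < Metric.diam s) : s.Nontrivial := by
  by_contra hs
  rw [not_nontrivial_iff] at hs
  rw [Metric.diam_subsingleton hs] at h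
  exact lt_irrefl 0 h

/- `shortStep c gap` minimises the upper bound `-γ * gap + γ ^ 2 * c / 2` over `γ ∈ [0, 1]`, and
`descentBound c gap` is the decrease it guarantees. -/
noncomputable def shortStep (c gap : ℝ) : ℝ := if gap ≤ c then gap / c else 1

noncomputable def descentBound (c gap : ℝ) : ℝ := if gap ≤ c then gap ^ 2 / (2 * c) else gap - c / 2

section ShortStep

variable {c gap : ℝ}

theorem shortStep_nonneg (hc : 0 ≤ c) (hgap : 0 ≤ gap) : 0 ≤ shortStep c gap := by
  unfold shortStep; split_ifs <;> positivity

theorem shortStep_le_one (hc : 0 ≤ c) : shortStep c gap ≤ 1 := by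
  unfold shortStep; split_ifs with h
  · exact div_le_one_of_le₀ h hc
  · exact le_rfl

theorem shortStep_mul_sub (c gap : ℝ) :
    shortStep c gap * gap - shortStep c gap ^ 2 * c / 2 = descentBound c gap := by
  unfold shortStep descentBound
  split_ifs
  · rcases eq_or_ne c 0 with rfl | hc
    · simp
    · field_simp; ring
  · ring

theorem mul_lt_of_lt_shortStep (hc : 0 ≤ c) {η : ℝ} (hη0 : 0 ≤ η) (hη : η < shortStep c gap) :
    c * η < gap := by
  unfold shortStep at hη
  split_ifs at hη with h
  · rcases hc.eq_or_lt with rfl | hc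
    · rw [div_zero] at hη; linarith
    · rwa [lt_div_iff₀ hc, mul_comm] at hη
  · nlinarith

end ShortStep

section Smoothness

variable {E : Type*} [NormedAddCommGroup E] [InnerProductSpace ℝ E]

def IsLSmoothOn (f : E → ℝ) (g : E → E) (L : ℝ) (C : Set E) : Prop :=
  ∀ x ∈ C, ∀ y ∈ C, f y ≤ f x + ⟪g x, y - x⟫ + L / 2 * ‖y - x‖ ^ 2

variable {C : Set E} {f : E → ℝ} {g : E → E} {L δ : ℝ}

theorem IsLSmoothOn.inner_sub_le (hf : IsLSmoothOn f g L C) {x y : E} (hx : x ∈ C) (hy : y ∈ C) :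
    ⟪g y - g x, y - x⟫ ≤ L * ‖y - x‖ ^ 2 := by
  have hxy := hf x hx y hy
  have hyx := hf y hy x hx
  rw [← neg_sub y x, inner_neg_right, norm_neg] at hyx
  rw [inner_sub_left]
  linarith

theorem IsLSmoothOn.le_sub_of_inner_le (hf : IsLSmoothOn f g L C) (hL : 0 ≤ L) {x d : E}
    {γ gap : ℝ} (hx : x ∈ C) (hxd : x + γ • d ∈ C) (hγ : 0 ≤ γ) (hd : ‖d‖ ≤ δ)
    (hdir : ⟪g x, d⟫ ≤ -gap) :
    f (x + γ • d) ≤ f x - (γ * gap - γ ^ 2 * (L * δ ^ 2) / 2) := by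
  have h := hf x hx _ hxd
  rw [add_sub_cancel_left, inner_smul_right, norm_smul, Real.norm_of_nonneg hγ] at h
  have hd2 : ‖d‖ ^ 2 ≤ δ ^ 2 := pow_le_pow_left₀ (norm_nonneg _) hd 2
  nlinarith [mul_le_mul_of_nonneg_left hdir hγ,
    mul_le_mul_of_nonneg_left hd2 (by positivity : 0 ≤ L * γ ^ 2)]

theorem IsLSmoothOn.le_sub_descentBound_of_isMinOn (hf : IsLSmoothOn f g L C) (hL : 0 ≤ L)
    {x d : E} {A η gap : ℝ} (hx : x ∈ C) (hseg : ∀ s ∈ Icc 0 A, x + s • d ∈ C) (hd : ‖d‖ ≤ δ)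
    (hgap : 0 ≤ gap) (hdir : ⟪g x, d⟫ ≤ -gap) (hA : shortStep (L * δ ^ 2) gap ≤ A)
    (hη : IsMinOn (fun s => f (x + s • d)) (Icc 0 A) η) :
    f (x + η • d) ≤ f x - descentBound (L * δ ^ 2) gap := by
  have hγ : shortStep (L * δ ^ 2) gap ∈ Icc 0 A := ⟨shortStep_nonneg (by positivity) hgap, hA⟩
  calc f (x + η • d) ≤ f (x + shortStep (L * δ ^ 2) gap • d) := isMinOn_iff.1 hη _ hγ
    _ ≤ f x - descentBound (L * δ ^ 2) gap := by
      rw [← shortStep_mul_sub]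
      exact hf.le_sub_of_inner_le hL hx (hseg _ hγ) hγ.1 hd hdir

variable [CompleteSpace E]

theorem ConvexOn.add_inner_sub_le_of_hasGradientAt (hf : ConvexOn ℝ C f) {p q G : E}
    (hp : p ∈ C) (hq : q ∈ C) (hG : HasGradientAt f G p) : f p + ⟪G, q - p⟫ ≤ f q := by
  have hderiv : HasDerivAt (f ∘ AffineMap.lineMap (k := ℝ) p q) ⟪G, q - p⟫ 0 := by
    have hG' : HasFDerivAt f (InnerProductSpace.toDual ℝ E G) (AffineMap.lineMap p q (0 : ℝ)) := by
      simpa using hG.hasFDerivAt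
    simpa using hG'.comp_hasDerivAt (0 : ℝ) AffineMap.hasDerivAt_lineMap
  have := (hf.comp_affineMap (AffineMap.lineMap p q)).le_slope_of_hasDerivAt
    (by simpa using hp) (by simpa using hq) zero_lt_one hderiv
  simp only [slope_def_field, comp_apply, AffineMap.lineMap_apply_one,
    AffineMap.lineMap_apply_zero, sub_zero, div_one] at this
  linarith

theorem ConvexOn.nonneg_of_isLSmoothOn (hf : ConvexOn ℝ C f)
    (hgrad : ∀ x ∈ C, HasGradientAt f (g x) x) (hs : IsLSmoothOn f g L C) (hC : C.Nontrivial) :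
    0 ≤ L := by
  obtain ⟨p, hp, q, hq, hpq⟩ := hC
  have hlow := hf.add_inner_sub_le_of_hasGradientAt hp hq (hgrad p hp)
  have hup := hs p hp q hq
  have hpos : 0 < ‖q - p‖ ^ 2 := by
    have : q - p ≠ 0 := sub_ne_zero.2 hpq.symm
    positivity
  nlinarith

theorem ConvexOn.sub_le_inner_sub_of_forall_inner_le (hf : ConvexOn ℝ C f) {x y v G : E}
    (hx : x ∈ C) (hy : y ∈ C) (hG : HasGradientAt f G x) (hv : ∀ u ∈ C, ⟪G, v⟫ ≤ ⟪G, u⟫) :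
    f x - f y ≤ ⟪G, x - v⟫ := by
  have hlow := hf.add_inner_sub_le_of_hasGradientAt hx hy hG
  have hvy := hv y hy
  rw [inner_sub_right] at hlow ⊢
  linarith

theorem HasGradientAt.inner_sub_nonneg_of_isMinOn_segment {p q G : E} (hG : HasGradientAt f G p)
    (hmin : IsMinOn f (segment ℝ p q) p) : 0 ≤ ⟪G, q - p⟫ := by
  simpa using hmin.localize.hasFDerivWithinAt_nonneg hG.hasFDerivAt.hasFDerivWithinAt
    (sub_mem_posTangentConeAt_of_segment_subset subset_rfl)

/- If the exact line search stops before the end `A` of its range, the slope of `f` along `d`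
is nonnegative there; it started at most at `-gap` and, by smoothness, grew by at most
`L * δ ^ 2 * η`. -/
theorem IsLSmoothOn.le_mul_of_isMinOn_of_lt (hf : IsLSmoothOn f g L C) (hL : 0 ≤ L)
    (hgrad : ∀ x ∈ C, HasGradientAt f (g x) x) {x d : E} {A η gap : ℝ} (hx : x ∈ C)
    (hseg : ∀ s ∈ Icc 0 A, x + s • d ∈ C) (hd : ‖d‖ ≤ δ) (hdir : ⟪g x, d⟫ ≤ -gap)
    (hη0 : 0 ≤ η) (hηA : η < A) (hη : IsMinOn (fun s => f (x + s • d)) (Icc 0 A) η) :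
    gap ≤ L * δ ^ 2 * η := by
  set p := x + η • d with hp_def
  have hp : p ∈ C := hseg η ⟨hη0, hηA.le⟩
  have hmin : IsMinOn f (segment ℝ p (x + A • d)) p := by
    rw [segment_eq_image']
    rintro _ ⟨θ, hθ, rfl⟩
    have hmem : η + θ * (A - η) ∈ Icc 0 A :=
      ⟨by nlinarith [hθ.1], by nlinarith [hθ.2]⟩
    have key := isMinOn_iff.1 hη _ hmem
    rwa [show x + (η + θ * (A - η)) • d = p + θ • (x + A • d - p) by rw [hp_def]; module] at key
  have hslope : 0 ≤ ⟪g p, d⟫ := by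
    have := (hgrad p hp).inner_sub_nonneg_of_isMinOn_segment hmin
    rw [show x + A • d - p = (A - η) • d by rw [hp_def]; module, inner_smul_right] at this
    exact nonneg_of_mul_nonneg_right (by linarith) (sub_pos.2 hηA)
  rcases hη0.eq_or_lt with rfl | hpos
  · rw [hp_def, zero_smul, add_zero] at hslope
    linarith
  · have hgrowth : η * ⟪g p - g x, d⟫ ≤ η * (L * δ ^ 2 * η) := by
      have := hf.inner_sub_le hx hp
      rw [show p - x = η • d by rw [hp_def]; abel, inner_smul_right, norm_smul,
        Real.norm_of_nonneg hη0] at this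
      have hd2 : ‖d‖ ^ 2 ≤ δ ^ 2 := pow_le_pow_left₀ (norm_nonneg _) hd 2
      nlinarith [mul_le_mul_of_nonneg_left hd2 (by positivity : 0 ≤ L * η ^ 2)]
    have := le_of_mul_le_mul_left hgrowth hpos
    rw [inner_sub_left] at this
    linarith

end Smoothness

section Weights

variable {E : Type*}

structure IsConvexWeights (S : Set E) (β : E → ℝ) : Prop where
  finite_support : (support β).Finite
  nonneg : ∀ u, 0 ≤ β u
  finsum_eq_one : ∑ᶠ u, β u = 1
  support_subset : support β ⊆ S

theorem IsConvexWeights.finsum_smul_mem [AddCommGroup E] [Module ℝ E] {S : Set E} {β : E → ℝ}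
    (hβ : IsConvexWeights S β) (hS : Convex ℝ S) : ∑ᶠ u, β u • u ∈ S :=
  hS.finsum_mem hβ.nonneg hβ.finsum_eq_one fun _ hu => hβ.support_subset hu

variable [DecidableEq E]

def pairwiseUpdate (β : E → ℝ) (a w : E) (γ : ℝ) : E → ℝ :=
  fun u => β u - γ * (if u = a then 1 else 0) + γ * (if u = w then 1 else 0)

def frankWolfeUpdate (β : E → ℝ) (v : E) (γ : ℝ) : E → ℝ :=
  fun u => (1 - γ) * β u + γ * (if u = v then 1 else 0)

variable {S : Set E} {β : E → ℝ} {a w v : E} {γ : ℝ}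
  {M : Type*} [AddCommGroup M] [Module ℝ M]

theorem finite_support_mul_ite_smul (b : E) (c : ℝ) (φ : E → M) :
    (support fun u => (c * if u = b then 1 else 0) • φ u).Finite :=
  (finite_singleton b).subset fun u hu => by_contra fun h => hu (by simp_all)

theorem finsum_mul_ite_smul (b : E) (c : ℝ) (φ : E → M) :
    ∑ᶠ u, (c * if u = b then 1 else 0) • φ u = c • φ b :=
  (finsum_eq_single _ b fun u hu => by simp [hu]).trans (by simp)

theorem finsum_pairwiseUpdate_smul (hβ : (support β).Finite) (φ : E → M) :
    ∑ᶠ u, pairwiseUpdate β a w γ u • φ u = ∑ᶠ u, β u • φ u + γ • (φ w - φ a) := by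
  have hβφ : (support fun u => β u • φ u).Finite := hβ.subset (support_smul_subset_left _ _)
  simp only [pairwiseUpdate, add_smul, sub_smul]
  rw [finsum_add_distrib ((hβφ.union (finite_support_mul_ite_smul a γ φ)).subset
      (support_sub _ _)) (finite_support_mul_ite_smul w γ φ),
    finsum_sub_distrib hβφ (finite_support_mul_ite_smul a γ φ), finsum_mul_ite_smul,
    finsum_mul_ite_smul, smul_sub]
  abel

theorem finsum_frankWolfeUpdate_smul (hβ : (support β).Finite) (φ : E → M) :
    ∑ᶠ u, frankWolfeUpdate β v γ u • φ u = (1 - γ) • ∑ᶠ u, β u • φ u + γ • φ v := by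
  have hβφ : (support fun u => β u • φ u).Finite := hβ.subset (support_smul_subset_left _ _)
  have hscaled : (support fun u => ((1 - γ) * β u) • φ u).Finite :=
    hβ.subset ((support_smul_subset_left _ _).trans (support_mul_subset_right _ _))
  simp only [frankWolfeUpdate, add_smul]
  rw [finsum_add_distrib hscaled (finite_support_mul_ite_smul v γ φ), finsum_mul_ite_smul,
    smul_finsum' _ hβφ]
  simp only [mul_smul]

theorem support_pairwiseUpdate_subset (ha : a ∈ support β) (hw : w ∈ support β) :
    support (pairwiseUpdate β a w γ) ⊆ support β := by
  intro u hu
  by_contra hu'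
  rw [notMem_support] at hu'
  have hua : u ≠ a := by rintro rfl; exact ha hu'
  have huw : u ≠ w := by rintro rfl; exact hw hu'
  simp [pairwiseUpdate, hu', hua, huw] at hu

theorem support_pairwiseUpdate_self_subset (ha : a ∈ support β) (hw : w ∈ support β)
    (hwa : w ≠ a) : support (pairwiseUpdate β a w (β a)) ⊆ support β \ {a} := fun u hu =>
  ⟨support_pairwiseUpdate_subset ha hw hu, by rintro rfl; simp [pairwiseUpdate, hwa.symm] at hu⟩

theorem support_frankWolfeUpdate_subset :
    support (frankWolfeUpdate β v γ) ⊆ insert v (support β) := by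
  intro u hu
  by_contra h
  simp only [mem_insert_iff, mem_support, not_or, not_not] at h
  simp [frankWolfeUpdate, h.1, h.2] at hu

theorem IsConvexWeights.pairwiseUpdate (hβ : IsConvexWeights S β) (ha : a ∈ support β)
    (hw : w ∈ support β) (hγ : γ ∈ Icc 0 (β a)) : IsConvexWeights S (pairwiseUpdate β a w γ) where
  finite_support := hβ.finite_support.subset (support_pairwiseUpdate_subset ha hw)
  nonneg u := by
    have := hβ.nonneg u
    unfold _root_.pairwiseUpdate
    split_ifs with hua huw huw <;> subst_vars <;> linarith [hγ.1, hγ.2]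
  finsum_eq_one := by
    simpa [hβ.finsum_eq_one] using finsum_pairwiseUpdate_smul (a := a) (w := w) (γ := γ)
      hβ.finite_support (fun _ => (1 : ℝ))
  support_subset := (support_pairwiseUpdate_subset ha hw).trans hβ.support_subset

end Weights

section Step

variable {E : Type*} [NormedAddCommGroup E] [InnerProductSpace ℝ E] [CompleteSpace E]
  [DecidableEq E] {C : Set E} {f : E → ℝ} {g : E → E} {L δ : ℝ}
  {β β' : E → ℝ} {x x' a w v : E} {η : ℝ}

theorem pairwise_descent_or_drop (hf : ConvexOn ℝ C f) (hgrad : ∀ x ∈ C, HasGradientAt f (g x) x)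
    (hs : IsLSmoothOn f g L C) (hL : 0 ≤ L) (hδ : ∀ p ∈ C, ∀ q ∈ C, ‖p - q‖ ≤ δ)
    (hβ : IsConvexWeights C β) (hx : x = ∑ᶠ u, β u • u) (ha : a ∈ support β)
    (hw : w ∈ support β) {gap : ℝ} (hgap : 0 ≤ gap) (hdir : ⟪g x, w - a⟫ ≤ -gap)
    (hη : η ∈ Icc 0 (β a)) (hls : IsMinOn (fun s => f (x + s • (w - a))) (Icc 0 (β a)) η) :
    f (x + η • (w - a)) ≤ f x - descentBound (L * δ ^ 2) gap ∨ (η = β a ∧ w ≠ a) := by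
  have hseg : ∀ s ∈ Icc 0 (β a), x + s • (w - a) ∈ C := fun s hs => by
    have := (hβ.pairwiseUpdate ha hw hs).finsum_smul_mem hf.1
    rwa [finsum_pairwiseUpdate_smul hβ.finite_support, ← hx] at this
  have hxC : x ∈ C := hx ▸ hβ.finsum_smul_mem hf.1
  have hd : ‖w - a‖ ≤ δ := hδ _ (hβ.support_subset hw) _ (hβ.support_subset ha)
  by_cases hA : shortStep (L * δ ^ 2) gap ≤ β a
  · exact Or.inl (hs.le_sub_descentBound_of_isMinOn hL hxC hseg hd hgap hdir hA hls)
  push Not at hA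
  have hc : 0 ≤ L * δ ^ 2 := by positivity
  refine Or.inr ⟨hη.2.eq_or_lt.resolve_right fun hlt => ?_, fun hwa => ?_⟩
  · have := hs.le_mul_of_isMinOn_of_lt hL hgrad hxC hseg hd hdir hη.1 hlt hls
    linarith [mul_lt_of_lt_shortStep hc hη.1 (hlt.trans hA)]
  · rw [hwa, sub_self, inner_zero_right] at hdir
    linarith [mul_lt_of_lt_shortStep hc (hβ.nonneg a) hA, mul_nonneg hc (hβ.nonneg a)]

theorem bpfw_step (hf : ConvexOn ℝ C f) (hgrad : ∀ x ∈ C, HasGradientAt f (g x) x)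
    (hs : IsLSmoothOn f g L C) (hL : 0 ≤ L) (hδ : ∀ p ∈ C, ∀ q ∈ C, ‖p - q‖ ≤ δ)
    (hβ : IsConvexWeights C β) (hx : x = ∑ᶠ u, β u • u) (hx' : x' = ∑ᶠ u, β' u • u)
    (ha : β a ≠ 0) (hw : β w ≠ 0) (hv : v ∈ C) (hvmin : ∀ u ∈ C, ⟪g x, v⟫ ≤ ⟪g x, u⟫)
    (hpw : ⟪g x, w - a⟫ ≤ ⟪g x, v - x⟫ →
      η ∈ Icc 0 (β a) ∧ (∀ η' ∈ Icc 0 (β a), f (x + η • (w - a)) ≤ f (x + η' • (w - a))) ∧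
        β' = pairwiseUpdate β a w η)
    (hfw : ¬⟪g x, w - a⟫ ≤ ⟪g x, v - x⟫ →
      η ∈ Icc (0 : ℝ) 1 ∧ (∀ η' ∈ Icc (0 : ℝ) 1, f (x + η • (v - x)) ≤ f (x + η' • (v - x))) ∧
        β' = frankWolfeUpdate β v η) :
    f x' ≤ f x ∧ support β' ⊆ insert v (support β) ∧
      (f x' ≤ f x - descentBound (L * δ ^ 2) ⟪g x, x - v⟫ ∨ support β' ⊆ support β \ {a}) := by
  have hxC : x ∈ C := hx ▸ hβ.finsum_smul_mem hf.1
  have hgap : 0 ≤ ⟪g x, x - v⟫ := by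
    rw [inner_sub_right]; linarith [hvmin x hxC]
  have hvx : ⟪g x, v - x⟫ = -⟪g x, x - v⟫ := by rw [← inner_neg_right, neg_sub]
  by_cases hcnd : ⟪g x, w - a⟫ ≤ ⟪g x, v - x⟫
  · obtain ⟨hη, hls, rfl⟩ := hpw hcnd
    have hx'eq : x' = x + η • (w - a) := by
      rw [hx', hx]; exact finsum_pairwiseUpdate_smul hβ.finite_support id
    subst hx'eq
    refine ⟨by simpa using hls 0 ⟨le_rfl, hβ.nonneg a⟩,
      (support_pairwiseUpdate_subset ha hw).trans (subset_insert _ _), ?_⟩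
    rcases pairwise_descent_or_drop hf hgrad hs hL hδ hβ hx ha hw hgap (hvx ▸ hcnd) hη
      (isMinOn_iff.2 hls) with hdesc | ⟨rfl, hwa⟩
    · exact Or.inl hdesc
    · exact Or.inr (support_pairwiseUpdate_self_subset ha hw hwa)
  · obtain ⟨hη, hls, rfl⟩ := hfw hcnd
    have hx'eq : x' = x + η • (v - x) := by
      have := finsum_frankWolfeUpdate_smul (v := v) (γ := η) hβ.finite_support id
      simp only [id] at this
      rw [hx', this, ← hx]; module
    subst hx'eq
    refine ⟨by simpa using hls 0 ⟨le_rfl, zero_le_one⟩, support_frankWolfeUpdate_subset, Or.inl ?_⟩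
    exact hs.le_sub_descentBound_of_isMinOn hL hxC (fun s hs => hf.1.add_smul_sub_mem hxC hv hs)
      (hδ v hv x hxC) hgap hvx.le (shortStep_le_one (by positivity))
      (isMinOn_iff.2 hls)

end Step

open Finset in
theorem le_two_mul_card_filter {ι : Type*} {S : ℕ → Set ι} {a b : ℕ → ι} {P : ℕ → Prop}
    [DecidablePred P] (hfin : ∀ t, (S t).Finite) (h0 : (S 0).ncard ≤ 1)
    (hins : ∀ t, S (t + 1) ⊆ insert (b t) (S t)) (hdrop : ∀ t, ¬P t → S (t + 1) ⊆ S t \ {a t})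
    (ha : ∀ t, a t ∈ S t) (t : ℕ) : t ≤ 2 * #{s ∈ range t | P s} := by
  have hinv : ∀ t, (S t).ncard + #{s ∈ range t | ¬P s} ≤ 1 + #{s ∈ range t | P s} := by
    intro t
    induction t with
    | zero => simpa using h0
    | succ t ih =>
      simp only [range_add_one, filter_insert]
      by_cases hP : P t
      · have := (ncard_le_ncard (hins t) ((hfin t).insert _)).trans (ncard_insert_le _ _)
        rw [if_pos hP, if_neg (not_not.2 hP), card_insert_of_notMem (by simp)]
        omega
      · have := (ncard_le_ncard (hdrop t hP) (hfin t).sdiff).trans_lt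
          (ncard_sdiff_singleton_lt_of_mem (ha t) (hfin t))
        rw [if_neg hP, if_pos hP, card_insert_of_notMem (by simp)]
        omega
  have hpos : 0 < (S t).ncard := (ncard_pos (hfin t)).2 ⟨a t, ha t⟩
  have hsplit := card_filter_add_card_filter_not (s := range t) P
  rw [card_range] at hsplit
  linarith [hinv t]

theorem succ_mul_le_of_le_sub_descentBound {c gap h h' k : ℝ} (hc : 0 ≤ c) (hk : 0 ≤ k)
    (hgap : h ≤ gap) (hmono : h' ≤ h) (hdesc : h' ≤ h - descentBound c gap)
    (hkh : k * h ≤ 2 * c) : (k + 1) * h' ≤ 2 * c := by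
  unfold descentBound at hdesc
  split_ifs at hdesc with hgc
  · rcases le_or_gt h 0 with hh | hh
    · nlinarith
    · have hc' : 0 < c := by linarith
      have hsq : h ^ 2 / (2 * c) ≤ gap ^ 2 / (2 * c) := by gcongr
      have key : (k + 1) * (h - h ^ 2 / (2 * c)) ≤ 2 * c := by
        rw [← sub_nonneg]
        have : 2 * c - (k + 1) * (h - h ^ 2 / (2 * c)) =
            ((2 * c - k * h) * (2 * c - h) + h ^ 2) / (2 * c) := by field_simp; ring
        rw [this]
        apply div_nonneg _ (by positivity)
        nlinarith
      nlinarith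
  · rcases le_or_gt h' 0 with hh | hh
    · nlinarith
    · rcases le_or_gt k 1 with hk1 | hk1 <;> nlinarith

open Finset in
theorem card_filter_mul_le_of_le_sub_descentBound {h gap : ℕ → ℝ} {c : ℝ} {P : ℕ → Prop}
    [DecidablePred P] (hc : 0 ≤ c) (hgap : ∀ t, h t ≤ gap t) (hmono : ∀ t, h (t + 1) ≤ h t)
    (hP : ∀ t, P t → h (t + 1) ≤ h t - descentBound c (gap t)) (t : ℕ) :
    #{s ∈ range t | P s} * h t ≤ 2 * c := by
  induction t with
  | zero => simpa using hc
  | succ t ih =>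
    simp only [range_add_one, filter_insert]
    by_cases hPt : P t
    · rw [if_pos hPt, card_insert_of_notMem (by simp), Nat.cast_succ]
      exact succ_mul_le_of_le_sub_descentBound hc (Nat.cast_nonneg _) (hgap t) (hmono t)
        (hP t hPt) ih
    · rw [if_neg hPt]
      exact (mul_le_mul_of_nonneg_left (hmono t) (Nat.cast_nonneg _)).trans ih

theorem bpfw_sublinear_convergence_general
    (n : ℕ) (C : Set (EuclideanSpace ℝ (Fin n)))
    (V : Set (EuclideanSpace ℝ (Fin n))) (hV : V = Set.extremePoints ℝ C)
    (δ : ℝ) (hδ : 0 < δ) (hdiam : Metric.diam C = δ)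
    (f : EuclideanSpace ℝ (Fin n) → ℝ)
    (g : EuclideanSpace ℝ (Fin n) → EuclideanSpace ℝ (Fin n))
    (L : ℝ)
    (hconv : ConvexOn ℝ C f)
    (hgrad : ∀ x ∈ C, HasGradientAt f (g x) x)
    (hsmooth : ∀ x ∈ C, ∀ y ∈ C,
      f y ≤ f x + ⟪g x, y - x⟫ + L / 2 * ‖y - x‖ ^ 2)
    -- the BPFW sequence: weights `α t`, iterates `x t`, away vertices `a t`,
    -- local FW vertices `w t`, FW vertices `v t`, step sizes `η t`
    (α : ℕ → EuclideanSpace ℝ (Fin n) → ℝ)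
    (x a w v : ℕ → EuclideanSpace ℝ (Fin n)) (η : ℕ → ℝ)
    (x0 : EuclideanSpace ℝ (Fin n))
    (hα0 : α 0 = fun u => if u = x0 then 1 else 0)
    (hαnn : ∀ t u, 0 ≤ α t u)
    (hαV : ∀ t u, α t u ≠ 0 → u ∈ V)
    (hαfin : ∀ t, (Function.support (α t)).Finite)
    (hαsum : ∀ t, ∑ᶠ u, α t u = 1)
    (hx : ∀ t, x t = ∑ᶠ u, α t u • u)
    (haS : ∀ t, α t (a t) ≠ 0)
    (hwS : ∀ t, α t (w t) ≠ 0)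
    (hvV : ∀ t, v t ∈ V)
    (hvmin : ∀ t, ∀ u ∈ C, ⟪g (x t), v t⟫ ≤ ⟪g (x t), u⟫)
    -- local pairwise step
    (hpw : ∀ t, ⟪g (x t), w t - a t⟫ ≤ ⟪g (x t), v t - x t⟫ →
      η t ∈ Set.Icc (0 : ℝ) (α t (a t)) ∧
      (∀ η' ∈ Set.Icc (0 : ℝ) (α t (a t)),
        f (x t + η t • (w t - a t)) ≤ f (x t + η' • (w t - a t))) ∧
      α (t + 1) = fun u =>
        α t u - η t * (if u = a t then 1 else 0)
          + η t * (if u = w t then 1 else 0))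
    -- FW step
    (hfw : ∀ t, ¬ ⟪g (x t), w t - a t⟫ ≤ ⟪g (x t), v t - x t⟫ →
      η t ∈ Set.Icc (0 : ℝ) 1 ∧
      (∀ η' ∈ Set.Icc (0 : ℝ) 1,
        f (x t + η t • (v t - x t)) ≤ f (x t + η' • (v t - x t))) ∧
      α (t + 1) = fun u =>
        (1 - η t) * α t u + η t * (if u = v t then 1 else 0)) :
    ∀ t : ℕ, 1 ≤ t → ∀ y ∈ C, f (x t) - f y ≤ 4 * L * δ ^ 2 / (t : ℝ) := by
  classical
  intro t ht y hy
  have hVC : V ⊆ C := hV ▸ extremePoints_subset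
  have hdiam_pos : 0 < Metric.diam C := hdiam ▸ hδ
  have hnorm : ∀ p ∈ C, ∀ q ∈ C, ‖p - q‖ ≤ δ := fun p hp q hq => hdiam ▸ dist_eq_norm p q ▸
    Metric.dist_le_diam_of_mem (Metric.isBounded_of_diam_pos hdiam_pos) hp hq
  have hL := hconv.nonneg_of_isLSmoothOn hgrad hsmooth (Metric.nontrivial_of_diam_pos hdiam_pos)
  have hweights : ∀ s, IsConvexWeights C (α s) := fun s =>
    ⟨hαfin s, hαnn s, hαsum s, fun u hu => hVC (hαV s u hu)⟩
  have hstep := fun s => bpfw_step hconv hgrad hsmooth hL hnorm (hweights s) (hx s) (hx (s + 1))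
    (haS s) (hwS s) (hVC (hvV s)) (hvmin s) (hpw s) (hfw s)
  have hxC : ∀ s, x s ∈ C := fun s => hx s ▸ (hweights s).finsum_smul_mem hconv.1
  have h0 : (support (α 0)).ncard ≤ 1 := by
    refine (ncard_le_ncard (s := support (α 0)) (t := {x0}) ?_).trans (ncard_singleton x0).le
    rw [hα0, support_subset_iff']
    exact fun u hu => if_neg hu
  set good := fun s => f (x (s + 1)) ≤ f (x s) - descentBound (L * δ ^ 2) ⟪g (x s), x s - v s⟫
  have hcount := le_two_mul_card_filter (P := good) hαfin h0 (fun s => (hstep s).2.1)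
    (fun s hs => (hstep s).2.2.resolve_left hs) haS t
  have hdecay := card_filter_mul_le_of_le_sub_descentBound (h := fun s => f (x s) - f y)
    (P := good) (by positivity) (fun s => hconv.sub_le_inner_sub_of_forall_inner_le
      (hxC s) hy (hgrad _ (hxC s)) (hvmin s))
    (fun s => sub_le_sub_right (hstep s).1 _)
    (fun s hs => (sub_le_sub_right hs _).trans_eq (sub_right_comm _ _ _)) t
  obtain ⟨k, hk, hdecay⟩ : ∃ k : ℕ, (t : ℝ) ≤ 2 * k ∧ k * (f (x t) - f y) ≤ 2 * (L * δ ^ 2) :=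
    ⟨_, by exact_mod_cast hcount, hdecay⟩
  rw [le_div_iff₀ (by exact_mod_cast ht)]
  rcases le_or_gt (f (x t) - f y) 0 with hneg | hpos
  · nlinarith
  · nlinarith

/-- Sublinear convergence of the blended pairwise Frank-Wolfe
algorithm (BPFW) with line-search. -/
theorem bpfw_sublinear_convergence
    (n : ℕ) (C : Set (EuclideanSpace ℝ (Fin n)))
    (hCne : C.Nonempty) (hCcomp : IsCompact C) (hCconv : Convex ℝ C)
    (V : Set (EuclideanSpace ℝ (Fin n))) (hV : V = Set.extremePoints ℝ C)
    (δ : ℝ) (hδ : 0 < δ) (hdiam : Metric.diam C = δ)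
    (f : EuclideanSpace ℝ (Fin n) → ℝ)
    (g : EuclideanSpace ℝ (Fin n) → EuclideanSpace ℝ (Fin n))
    (L : ℝ)
    (hconv : ConvexOn ℝ C f)
    (hgrad : ∀ x ∈ C, HasGradientAt f (g x) x)
    (hsmooth : ∀ x ∈ C, ∀ y ∈ C,
      f y ≤ f x + ⟪g x, y - x⟫ + L / 2 * ‖y - x‖ ^ 2)
    -- the BPFW sequence: weights `α t`, iterates `x t`, away vertices `a t`,
    -- local FW vertices `w t`, FW vertices `v t`, step sizes `η t`
    (α : ℕ → EuclideanSpace ℝ (Fin n) → ℝ)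
    (x a w v : ℕ → EuclideanSpace ℝ (Fin n)) (η : ℕ → ℝ)
    (x0 : EuclideanSpace ℝ (Fin n)) (hx0V : x0 ∈ V)
    (hα0 : α 0 = fun u => if u = x0 then 1 else 0)
    (hαnn : ∀ t u, 0 ≤ α t u)
    (hαV : ∀ t u, α t u ≠ 0 → u ∈ V)
    (hαfin : ∀ t, (Function.support (α t)).Finite)
    (hαsum : ∀ t, ∑ᶠ u, α t u = 1)
    (hx : ∀ t, x t = ∑ᶠ u, α t u • u)
    (haS : ∀ t, α t (a t) ≠ 0)
    (hamax : ∀ t, ∀ u, α t u ≠ 0 → ⟪g (x t), u⟫ ≤ ⟪g (x t), a t⟫)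
    (hwS : ∀ t, α t (w t) ≠ 0)
    (hwmin : ∀ t, ∀ u, α t u ≠ 0 → ⟪g (x t), w t⟫ ≤ ⟪g (x t), u⟫)
    (hvV : ∀ t, v t ∈ V)
    (hvmin : ∀ t, ∀ u ∈ C, ⟪g (x t), v t⟫ ≤ ⟪g (x t), u⟫)
    -- local pairwise step
    (hpw : ∀ t, ⟪g (x t), w t - a t⟫ ≤ ⟪g (x t), v t - x t⟫ →
      η t ∈ Set.Icc (0 : ℝ) (α t (a t)) ∧
      (∀ η' ∈ Set.Icc (0 : ℝ) (α t (a t)),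
        f (x t + η t • (w t - a t)) ≤ f (x t + η' • (w t - a t))) ∧
      α (t + 1) = fun u =>
        α t u - η t * (if u = a t then 1 else 0)
          + η t * (if u = w t then 1 else 0))
    -- FW step
    (hfw : ∀ t, ¬ ⟪g (x t), w t - a t⟫ ≤ ⟪g (x t), v t - x t⟫ →
      η t ∈ Set.Icc (0 : ℝ) 1 ∧
      (∀ η' ∈ Set.Icc (0 : ℝ) 1,
        f (x t + η t • (v t - x t)) ≤ f (x t + η' • (v t - x t))) ∧
      α (t + 1) = fun u =>
        (1 - η t) * α t u + η t * (if u = v t then 1 else 0)) :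
    ∀ t : ℕ, 1 ≤ t → ∀ y ∈ C, f (x t) - f y ≤ 4 * L * δ ^ 2 / (t : ℝ) :=
  bpfw_sublinear_convergence_general n C V hV δ hδ hdiam f g L hconv hgrad hsmooth α x a w v η x0
    hα0 hαnn hαV hαfin hαsum hx haS hwS hvV hvmin hpw hfw
end

section
/- (Properties of the active set cleanup step ASC.) Let n ∈ ℕ, let T ⊆ ℝ^n be a finite set, let β : T → ℝ satisfy β_s > 0 for all s ∈ T and Σ_{s∈T} β_s = 1, let D ⊆ T with |D| ≤ 1, and let N ∈ ℝ^{(n+2)×(n+2)} satisfy: (1) N is invertible, every entry of row n+1 of N is ≥ 0, and every entry of row n+2 of N is ≥ 1; (2) for every i ∈ [n+2], if N_{n+1,i} = 0 then there exists s ∈ T\D with s̃ = N_{:,i}; (3) for every s ∈ T\D there exists i ∈ [n+2] with N_{:,i} = s̃. Define λ ∈ ℝ^{n+2}, Q ∈ ℝ^{(n+2)×(n+2)}, M ∈ ℝ^{(n+2)×(n+2)}, α : ℝ^n → ℝ and S as in the ASC procedure of the context (for any admissible choices of k and ℓ). Then: (0) if D = {v}, the vector r = −N^{−1}ṽ has at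 least one strictly negative entry, so k exists; (4) M is invertible, every entry of row n+1 of M is ≥ 0, and every entry of row n+2 of M is ≥ 1; (5) for every i ∈ [n+2], if λ_i > 0 then there exists s ∈ S ∩ T with s̃ = M_{:,i} = Q_{:,i}; (6) Σ_{s∈T} β_s·s = Σ_{s∈S} α_s·s; (7) for every i ∈ [n+2], if M_{n+1,i} = 0 then there exists s ∈ S with s̃ = M_{:,i}; (8) for every s ∈ S there exists i ∈ [n+2] with M_{:,i} = s̃; (9) S ⊆ T and |S| ≤ n+1. -/
/-!
Row `n+1` of every `x̃` is `0`, so row `n+1` of `Qλ = ∑ β_s s̃` vanishes; as row `n+1` of `Q`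
and `λ` are nonnegative, every column of `Q` of positive weight has a `0` there and is therefore
some `s̃` with `s ∈ T`. The cleanup only adds column `ℓ` to weightless columns: it is a unimodular
column operation, it leaves `Qλ` unchanged, and the columns of `M` of positive weight are exactly
the `s̃` with `s ∈ S`. Dropping the last two coordinates of `Mλ = ∑ β_s s̃` gives (6), and since
none of these columns is column `ℓ`, `|S| ≤ n + 1`.

In the pivot case `Nr = -ṽ`, and `θ*` is the ratio test of the simplex method: it keeps the weights
nonnegative and zeroes the weight of column `k`, which can thus be replaced by `ṽ`.
-/

open Classical

/-- For `x ∈ ℝ^n`, `x̃ = (x₁, …, xₙ, 0, 1) ∈ ℝ^{n+2}`. -/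
def tilde {n : ℕ} (x : Fin n → ℝ) : Fin (n + 2) → ℝ :=
  Fin.snoc (Fin.snoc x 0) 1

section Tilde

variable {n : ℕ}

def untilde : (Fin (n + 2) → ℝ) →ₗ[ℝ] Fin n → ℝ :=
  LinearMap.funLeft ℝ ℝ (Fin.castSucc ∘ Fin.castSucc)

@[simp] lemma untilde_tilde (x : Fin n → ℝ) : untilde (tilde x) = x := by
  ext j
  simp [untilde, tilde, LinearMap.funLeft_apply]

lemma tilde_injective : Function.Injective (tilde (n := n)) :=
  Function.LeftInverse.injective untilde_tilde

@[simp] lemma tilde_apply_castSucc_last (x : Fin n → ℝ) : tilde x (Fin.last n).castSucc = 0 := by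
  simp [tilde]

@[simp] lemma tilde_apply_last (x : Fin n → ℝ) : tilde x (Fin.last (n + 1)) = 1 := by
  simp [tilde]

lemma sum_smul_eq_of_sum_smul_tilde_eq {A B : Finset (Fin n → ℝ)} {a b : (Fin n → ℝ) → ℝ}
    (h : ∑ s ∈ A, a s • tilde s = ∑ s ∈ B, b s • tilde s) :
    ∑ s ∈ A, a s • s = ∑ s ∈ B, b s • s := by
  simpa using congrArg untilde h

end Tilde

namespace Matrix

variable {m R : Type*} [Fintype m]

lemma mulVec_eq_sum_smul_cols [CommSemiring R] (A : Matrix m m R) (v : m → R) :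
    A *ᵥ v = ∑ i, v i • fun j => A j i := by
  ext j
  simp [mulVec, dotProduct, Finset.sum_apply, mul_comm]

variable [DecidableEq m]

lemma injective_cols_of_isUnit_det {K : Type*} [Field K] {A : Matrix m m K}
    (hA : IsUnit A.det) : Function.Injective fun i j => A j i :=
  (linearIndependent_cols_of_det_ne_zero hA.ne_zero).injective

lemma det_updateCol_eq_det_mul_inv_mulVec [CommRing R] {A : Matrix m m R}
    (hA : IsUnit A.det) (k : m) (w : m → R) :
    (A.updateCol k w).det = A.det * (A⁻¹ *ᵥ w) k := by
  rw [← cramer_apply, cramer_eq_adjugate_mulVec, inv_def, smul_mulVec, Pi.smul_apply,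
    smul_eq_mul, Ring.mul_inverse_cancel_left _ _ hA]

lemma det_of_add_mul_col [CommRing R] (A : Matrix m m R) {ℓ : m} {c : m → R} (hc : c ℓ = 0) :
    (of fun j i => A j i + c i * A j ℓ).det = A.det := by
  have hA : (of fun j i => A j i + c i * A j ℓ) =
      A * (1 + replicateCol Unit (Pi.single ℓ (1 : R)) * replicateRow Unit c) := by
    ext j i
    simp [mul_apply, replicateCol, replicateRow, Pi.single_apply, mul_add,
      Finset.sum_add_distrib, one_apply, mul_comm]
  rw [hA, det_mul, det_one_add_replicateCol_mul_replicateRow]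
  simp [dotProduct, Pi.single_apply, hc]

lemma sum_smul_cols_updateCol [CommRing R] {N : Matrix m m R} {k : m} {w r μ lam : m → R}
    {b θ : R} (hr : N *ᵥ r = -w) (hk : μ k + θ * r k = 0) (hlamk : lam k = b + θ)
    (hlam : ∀ i ≠ k, lam i = μ i + θ * r i) :
    ∑ i, lam i • (fun j => N.updateCol k w j i) = ∑ i, μ i • (fun j => N j i) + b • w := by
  have hterm : ∀ i, lam i • (fun j => N.updateCol k w j i) =
      μ i • (fun j => N j i) + θ • r i • (fun j => N j i) + if i = k then (b + θ) • w else 0 := by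
    intro i
    ext j
    by_cases hik : i = k
    · subst hik
      simp only [Pi.add_apply, Pi.smul_apply, smul_eq_mul, updateCol_self, if_true, hlamk]
      linear_combination -N j i * hk
    · simp [hik, hlam i hik]
      ring
  rw [Finset.sum_congr rfl fun i _ => hterm i, Finset.sum_add_distrib, Finset.sum_add_distrib,
    Finset.sum_ite_eq', ← Finset.smul_sum, ← mulVec_eq_sum_smul_cols N r, hr]
  simp only [Finset.mem_univ, if_true]
  module

end Matrix

section Weights

variable {ι α R V : Type*} {c : ι → V} {g : α → V} {β : α → R} {γ : ι → R}

lemma exists_pos_of_dotProduct_pos [Fintype ι] [Semiring R] [LinearOrder R] [IsOrderedRing R]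
    {w x : ι → R} (hw : 0 ≤ w) (h : 0 < w ⬝ᵥ x) : ∃ i, 0 < x i := by
  by_contra! hx
  exact h.not_ge (Finset.sum_nonpos fun i _ => mul_nonpos_of_nonneg_of_nonpos (hw i) (hx i))

lemma sum_smul_cols_eq_sum_smul [Fintype ι] [Semiring R] [AddCommMonoid V] [Module R V]
    (hc : Function.Injective c) (hg : Function.Injective g) {T : Finset α}
    (hT : ∀ s ∈ T, ∃ i, c i = g s) (hγ : ∀ i, ∀ s ∈ T, c i = g s → γ i = β s)
    (hγ0 : ∀ i, (∀ s ∈ T, c i ≠ g s) → γ i = 0) :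
    ∑ i, γ i • c i = ∑ s ∈ T, β s • g s := by
  choose e he using hT
  rw [← Finset.sum_filter_of_ne (p := fun i => ∃ s ∈ T, c i = g s)]
  · symm
    refine Finset.sum_bij e (fun s hs => Finset.mem_filter.mpr ⟨Finset.mem_univ _, s, hs, he s hs⟩)
      (fun s hs t ht hst => hg ?_) (fun i hi => ?_) (fun s hs => ?_)
    · rw [← he s hs, ← he t ht, hst]
    · obtain ⟨s, hs, hcs⟩ := (Finset.mem_filter.mp hi).2
      exact ⟨s, hs, hc ((he s hs).trans hcs.symm)⟩
    · rw [he s hs, hγ _ s hs (he s hs)]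
  · intro i _ hi
    by_contra! h
    exact hi (by rw [hγ0 i h, zero_smul])

lemma nonneg_of_forall_eq_of_forall_ne [Zero R] [Preorder R] {T : Set α}
    (hβ : ∀ s ∈ T, 0 ≤ β s) (hγ : ∀ i, ∀ s ∈ T, c i = g s → γ i = β s)
    (hγ0 : ∀ i, (∀ s ∈ T, c i ≠ g s) → γ i = 0) (i : ι) : 0 ≤ γ i := by
  by_cases h : ∃ s ∈ T, c i = g s
  · obtain ⟨s, hs, hcs⟩ := h
    exact hγ i s hs hcs ▸ hβ s hs
  · exact (hγ0 i fun s hs hcs => h ⟨s, hs, hcs⟩).ge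

end Weights

open Matrix in
lemma exists_pos_inv_mulVec_tilde {n : ℕ} {N : Matrix (Fin (n + 2)) (Fin (n + 2)) ℝ}
    (hN : IsUnit N.det) (hNrow : ∀ i, 1 ≤ N (Fin.last (n + 1)) i) (v : Fin n → ℝ) :
    ∃ i, 0 < (N⁻¹ *ᵥ tilde v) i := by
  have h : (N *ᵥ (N⁻¹ *ᵥ tilde v)) (Fin.last (n + 1)) = 1 := by
    rw [mulVec_mulVec, mul_nonsing_inv _ hN, one_mulVec, tilde_apply_last]
  exact exists_pos_of_dotProduct_pos (fun i => zero_le_one.trans (hNrow i))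
    (one_pos.trans_eq h.symm)

lemma ratio_test_nonneg {K : Type*} [Field K] [LinearOrder K] [IsStrictOrderedRing K]
    {μ θ r : K} (hμ : 0 ≤ μ) (hθ : 0 ≤ θ) (hmin : r < 0 → θ ≤ -μ / r) : 0 ≤ μ + θ * r := by
  rcases le_or_gt 0 r with hr | hr
  · positivity
  · linarith [(le_div_iff_of_neg hr).mp (hmin hr)]

section ActiveBasis

variable {n : ℕ}

-- Conditions (1) and (2) on `Q`, with `λ ≥ 0` the coordinates of `∑ β_s s̃` in the basis `Q`: the
-- state reached by ASC before the cleanup with `ℓ`. The paper's rows `n+1` and `n+2` are the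
-- penultimate and last rows.
structure IsActiveBasis (T : Finset (Fin n → ℝ)) (β : (Fin n → ℝ) → ℝ)
    (Q : Matrix (Fin (n + 2)) (Fin (n + 2)) ℝ) (lam : Fin (n + 2) → ℝ) : Prop where
  isUnit_det : IsUnit Q.det
  penultimate_row_nonneg : ∀ i, 0 ≤ Q (Fin.last n).castSucc i
  one_le_last_row : ∀ i, 1 ≤ Q (Fin.last (n + 1)) i
  weight_nonneg : ∀ i, 0 ≤ lam i
  sum_smul_cols : ∑ i, lam i • (fun j => Q j i) = ∑ s ∈ T, β s • tilde s
  exists_tilde_of_penultimate_eq_zero :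
    ∀ i, Q (Fin.last n).castSucc i = 0 → ∃ s ∈ T, tilde s = fun j => Q j i

variable {T : Finset (Fin n → ℝ)} {β : (Fin n → ℝ) → ℝ}
  {N : Matrix (Fin (n + 2)) (Fin (n + 2)) ℝ} {lam : Fin (n + 2) → ℝ}

lemma isActiveBasis_of_weights (hβ : ∀ s ∈ T, 0 < β s) (hN : IsUnit N.det)
    (hNrow : ∀ i, 0 ≤ N (Fin.last n).castSucc i) (hNrow' : ∀ i, 1 ≤ N (Fin.last (n + 1)) i)
    (hN0 : ∀ i, N (Fin.last n).castSucc i = 0 → ∃ s ∈ (T : Set _), tilde s = fun j => N j i)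
    (hTN : ∀ s ∈ (T : Set _), ∃ i, (fun j => N j i) = tilde s)
    (hlam : ∀ i, ∀ s ∈ (T : Set _), (fun j => N j i) = tilde s → lam i = β s)
    (hlam0 : ∀ i, (∀ s ∈ (T : Set _), (fun j => N j i) ≠ tilde s) → lam i = 0) :
    IsActiveBasis T β N lam where
  isUnit_det := hN
  penultimate_row_nonneg := hNrow
  one_le_last_row := hNrow'
  weight_nonneg := nonneg_of_forall_eq_of_forall_ne (fun s hs => (hβ s hs).le) hlam hlam0
  sum_smul_cols :=
    sum_smul_cols_eq_sum_smul (Matrix.injective_cols_of_isUnit_det hN) tilde_injective hTN hlam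
      hlam0
  exists_tilde_of_penultimate_eq_zero := hN0

open Matrix in
lemma isActiveBasis_updateCol (hβ : ∀ s ∈ T, 0 < β s) {v : Fin n → ℝ} (hv : v ∈ T)
    (hN : IsUnit N.det)
    (hNrow : ∀ i, 0 ≤ N (Fin.last n).castSucc i) (hNrow' : ∀ i, 1 ≤ N (Fin.last (n + 1)) i)
    (hN0 : ∀ i, N (Fin.last n).castSucc i = 0 →
      ∃ s ∈ (T : Set _) \ {v}, tilde s = fun j => N j i)
    (hTN : ∀ s ∈ (T : Set _) \ {v}, ∃ i, (fun j => N j i) = tilde s)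
    {μ : Fin (n + 2) → ℝ} (hμ : ∀ i, ∀ s ∈ (T : Set _), (fun j => N j i) = tilde s → μ i = β s)
    (hμ0 : ∀ i, (∀ s ∈ (T : Set _), (fun j => N j i) ≠ tilde s) → μ i = 0)
    {r : Fin (n + 2) → ℝ} (hr : r = -(N⁻¹ *ᵥ tilde v)) {k : Fin (n + 2)} (hrk : r k < 0)
    (hmin : ∀ i, r i < 0 → -μ k / r k ≤ -μ i / r i) {θ : ℝ} (hθ : θ = -μ k / r k)
    (hlamk : lam k = β v + θ) (hlam : ∀ i, i ≠ k → lam i = μ i + θ * r i) :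
    IsActiveBasis T β (N.updateCol k (tilde v)) lam := by
  have hμ_nonneg := nonneg_of_forall_eq_of_forall_ne (fun s hs => (hβ s hs).le) hμ hμ0
  have hθ_nonneg : 0 ≤ θ := hθ ▸ div_nonneg_of_nonpos (neg_nonpos.mpr (hμ_nonneg k)) hrk.le
  have hNr : N *ᵥ r = -tilde v := by
    rw [hr, mulVec_neg, mulVec_mulVec, mul_nonsing_inv _ hN, one_mulVec]
  have hv_not_col : ∀ i, (fun j => N j i) ≠ tilde v := fun i hi => by
    obtain ⟨s, ⟨-, hsv⟩, hs⟩ := hN0 i ((congrFun hi _).trans (tilde_apply_castSucc_last v))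
    exact hsv (tilde_injective (hs.trans hi))
  refine ⟨?_, fun i => ?_, fun i => ?_, fun i => ?_, ?_, fun i hi => ?_⟩
  · rw [det_updateCol_eq_det_mul_inv_mulVec hN, isUnit_iff_ne_zero]
    have hk : (N⁻¹ *ᵥ tilde v) k ≠ 0 := by
      rw [hr, Pi.neg_apply] at hrk
      linarith
    exact mul_ne_zero hN.ne_zero hk
  · rw [updateCol_apply]
    split_ifs <;> simp [hNrow]
  · rw [updateCol_apply]
    split_ifs <;> simp [hNrow']
  · rcases eq_or_ne i k with rfl | hik
    · rw [hlamk]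
      linarith [hβ v hv]
    · rw [hlam i hik]
      exact ratio_test_nonneg (hμ_nonneg i) hθ_nonneg fun hri => hθ ▸ hmin i hri
  · have hk : μ k + θ * r k = 0 := by
      rw [hθ, div_mul_cancel₀ _ hrk.ne]
      ring
    rw [sum_smul_cols_updateCol hNr hk hlamk hlam, ← Finset.sum_erase_add _ _ hv]
    congr 1
    refine sum_smul_cols_eq_sum_smul (injective_cols_of_isUnit_det hN) tilde_injective
      (fun s hs => hTN s ?_) (fun i s hs => hμ i s (Finset.mem_of_mem_erase hs))
      (fun i h => hμ0 i fun s hs => ?_)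
    · simpa [and_comm] using hs
    · rcases eq_or_ne s v with rfl | hsv
      · exact hv_not_col i
      · exact h s (Finset.mem_erase.mpr ⟨hsv, hs⟩)
  · rcases eq_or_ne i k with rfl | hik
    · exact ⟨v, hv, funext fun j => by simp⟩
    · obtain ⟨s, ⟨hs, -⟩, hsi⟩ := hN0 i (by simpa [updateCol_apply, hik] using hi)
      exact ⟨s, hs, funext fun j => by simp [hik, congrFun hsi j]⟩

end ActiveBasis

section Cleanup

variable {n : ℕ} {T : Finset (Fin n → ℝ)} {β : (Fin n → ℝ) → ℝ}
  {Q : Matrix (Fin (n + 2)) (Fin (n + 2)) ℝ} {lam : Fin (n + 2) → ℝ} {ℓ : Fin (n + 2)}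
  {α : (Fin n → ℝ) → ℝ}

noncomputable def cleanupMatrix (Q : Matrix (Fin (n + 2)) (Fin (n + 2)) ℝ)
    (lam : Fin (n + 2) → ℝ) (ℓ : Fin (n + 2)) : Matrix (Fin (n + 2)) (Fin (n + 2)) ℝ :=
  Matrix.of fun j i =>
    if lam i = 0 ∧ Q (Fin.last n).castSucc i = 0 then Q j i + Q j ℓ else Q j i

lemma cleanupMatrix_apply_of_not {i : Fin (n + 2)}
    (h : ¬(lam i = 0 ∧ Q (Fin.last n).castSucc i = 0)) (j : Fin (n + 2)) :
    cleanupMatrix Q lam ℓ j i = Q j i := by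
  simp [cleanupMatrix, h]

lemma cleanupMatrix_apply_of_weight_pos {i : Fin (n + 2)} (hi : 0 < lam i) (j : Fin (n + 2)) :
    cleanupMatrix Q lam ℓ j i = Q j i :=
  cleanupMatrix_apply_of_not (fun h => hi.ne' h.1) j

lemma cleanupMatrix_apply_self (hℓ : Q (Fin.last n).castSucc ℓ ≠ 0) (j : Fin (n + 2)) :
    cleanupMatrix Q lam ℓ j ℓ = Q j ℓ :=
  cleanupMatrix_apply_of_not (fun h => hℓ h.2) j

lemma cleanupMatrix_col_self_ne_tilde (hℓ : Q (Fin.last n).castSucc ℓ ≠ 0) (s : Fin n → ℝ) :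
    (fun j => cleanupMatrix Q lam ℓ j ℓ) ≠ tilde s := fun h =>
  hℓ <| (cleanupMatrix_apply_self hℓ _).symm.trans
    ((congrFun h _).trans (tilde_apply_castSucc_last s))

lemma isUnit_det_cleanupMatrix (hQ : IsUnit Q.det) (hℓ : Q (Fin.last n).castSucc ℓ ≠ 0) :
    IsUnit (cleanupMatrix Q lam ℓ).det := by
  have hM : cleanupMatrix Q lam ℓ = Matrix.of fun j i =>
      Q j i + (if lam i = 0 ∧ Q (Fin.last n).castSucc i = 0 then 1 else 0) * Q j ℓ := by
    ext j i
    simp only [cleanupMatrix, Matrix.of_apply]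
    split_ifs <;> ring
  rwa [hM, Matrix.det_of_add_mul_col _ (by simp [hℓ])]

lemma finite_and_ncard_le_of_forall_exists_col_ne {M : Matrix (Fin (n + 2)) (Fin (n + 2)) ℝ}
    {S : Set (Fin n → ℝ)} (h : ∀ s ∈ S, ∃ i ≠ ℓ, (fun j => M j i) = tilde s) :
    S.Finite ∧ S.ncard ≤ n + 1 := by
  have hsub : S ⊆ ((Finset.univ.erase ℓ).image fun i => untilde fun j => M j i : Finset _) := by
    intro s hs
    obtain ⟨i, hiℓ, hi⟩ := h s hs
    simpa using ⟨i, hiℓ, by rw [hi, untilde_tilde]⟩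
  refine ⟨(Finset.finite_toSet _).subset hsub, ?_⟩
  calc S.ncard ≤ _ := Set.ncard_le_ncard hsub
    _ ≤ (Finset.univ.erase ℓ).card := (Set.ncard_coe_finset _).trans_le Finset.card_image_le
    _ = n + 1 := by simp

namespace IsActiveBasis

lemma weight_mul_penultimate_eq_zero (hQ : IsActiveBasis T β Q lam) (i : Fin (n + 2)) :
    lam i * Q (Fin.last n).castSucc i = 0 := by
  have h := congrFun hQ.sum_smul_cols (Fin.last n).castSucc
  simp only [Finset.sum_apply, Pi.smul_apply, smul_eq_mul, tilde_apply_castSucc_last, mul_zero,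
    Finset.sum_const_zero] at h
  exact (Finset.sum_eq_zero_iff_of_nonneg fun i _ =>
    mul_nonneg (hQ.weight_nonneg i) (hQ.penultimate_row_nonneg i)).mp h i (Finset.mem_univ i)

lemma exists_tilde_of_weight_pos (hQ : IsActiveBasis T β Q lam) {i : Fin (n + 2)}
    (hi : 0 < lam i) : ∃ s ∈ T, tilde s = fun j => Q j i :=
  hQ.exists_tilde_of_penultimate_eq_zero i
    ((mul_eq_zero.mp (hQ.weight_mul_penultimate_eq_zero i)).resolve_left hi.ne')

lemma cleanupMatrix_penultimate_nonneg (hQ : IsActiveBasis T β Q lam) (i : Fin (n + 2)) :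
    0 ≤ cleanupMatrix Q lam ℓ (Fin.last n).castSucc i := by
  simp only [cleanupMatrix, Matrix.of_apply]
  split_ifs with h
  · rw [h.2, zero_add]
    exact hQ.penultimate_row_nonneg ℓ
  · exact hQ.penultimate_row_nonneg i

lemma one_le_cleanupMatrix_last (hQ : IsActiveBasis T β Q lam) (i : Fin (n + 2)) :
    1 ≤ cleanupMatrix Q lam ℓ (Fin.last (n + 1)) i := by
  simp only [cleanupMatrix, Matrix.of_apply]
  split_ifs
  · linarith [hQ.one_le_last_row i, hQ.one_le_last_row ℓ]
  · exact hQ.one_le_last_row i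

lemma weight_pos_of_cleanupMatrix_penultimate_eq_zero (hQ : IsActiveBasis T β Q lam)
    (hℓ : Q (Fin.last n).castSucc ℓ ≠ 0) {i : Fin (n + 2)}
    (h : cleanupMatrix Q lam ℓ (Fin.last n).castSucc i = 0) : 0 < lam i := by
  by_cases hc : lam i = 0 ∧ Q (Fin.last n).castSucc i = 0
  · rw [cleanupMatrix, Matrix.of_apply, if_pos hc, hc.2, zero_add] at h
    exact absurd h hℓ
  · rw [cleanupMatrix_apply_of_not hc] at h
    exact (hQ.weight_nonneg i).lt_of_ne' fun h' => hc ⟨h', h⟩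

lemma weight_pos_of_cleanupMatrix_col_eq_tilde (hQ : IsActiveBasis T β Q lam)
    (hℓ : Q (Fin.last n).castSucc ℓ ≠ 0) {i : Fin (n + 2)} {s : Fin n → ℝ}
    (h : (fun j => cleanupMatrix Q lam ℓ j i) = tilde s) : 0 < lam i :=
  hQ.weight_pos_of_cleanupMatrix_penultimate_eq_zero hℓ
    ((congrFun h _).trans (tilde_apply_castSucc_last s))

lemma mem_of_cleanupMatrix_col_eq_tilde (hQ : IsActiveBasis T β Q lam)
    (hℓ : Q (Fin.last n).castSucc ℓ ≠ 0) {i : Fin (n + 2)} {s : Fin n → ℝ}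
    (h : (fun j => cleanupMatrix Q lam ℓ j i) = tilde s) : s ∈ T := by
  have hi := hQ.weight_pos_of_cleanupMatrix_col_eq_tilde hℓ h
  obtain ⟨t, ht, hti⟩ := hQ.exists_tilde_of_weight_pos hi
  have hQi : (fun j => Q j i) = tilde s :=
    (funext (cleanupMatrix_apply_of_weight_pos (ℓ := ℓ) hi)).symm.trans h
  rwa [← tilde_injective (hti.trans hQi)]

lemma exists_mem_support_of_weight_pos (hQ : IsActiveBasis T β Q lam)
    (hα : ∀ s i, (fun j => cleanupMatrix Q lam ℓ j i) = tilde s → α s = lam i)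
    {i : Fin (n + 2)} (hi : 0 < lam i) :
    ∃ s ∈ {s | 0 < α s} ∩ (T : Set _), tilde s = (fun j => cleanupMatrix Q lam ℓ j i) ∧
      ∀ j, cleanupMatrix Q lam ℓ j i = Q j i := by
  have hcol := cleanupMatrix_apply_of_weight_pos (Q := Q) (ℓ := ℓ) hi
  obtain ⟨s, hsT, hs⟩ := hQ.exists_tilde_of_weight_pos hi
  have hsM : tilde s = fun j => cleanupMatrix Q lam ℓ j i :=
    hs.trans (funext fun j => (hcol j).symm)
  exact ⟨s, ⟨hi.trans_eq (hα s i hsM.symm).symm, hsT⟩, hsM, hcol⟩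

lemma sum_smul_cols_eq_sum_smul_support (hQ : IsActiveBasis T β Q lam)
    (hℓ : Q (Fin.last n).castSucc ℓ ≠ 0)
    (hα : ∀ s i, (fun j => cleanupMatrix Q lam ℓ j i) = tilde s → α s = lam i)
    (hS : ∀ s ∈ {s | 0 < α s}, ∃ i, (fun j => cleanupMatrix Q lam ℓ j i) = tilde s)
    (hSfin : {s | 0 < α s}.Finite) :
    ∑ i, lam i • (fun j => Q j i) = ∑ s ∈ hSfin.toFinset, α s • tilde s := by
  calc ∑ i, lam i • (fun j => Q j i) = ∑ i, lam i • (fun j => cleanupMatrix Q lam ℓ j i) := by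
        refine Finset.sum_congr rfl fun i _ => ?_
        rcases (hQ.weight_nonneg i).eq_or_lt with hi | hi
        · simp [← hi]
        · rw [funext (cleanupMatrix_apply_of_weight_pos (ℓ := ℓ) hi)]
    _ = ∑ s ∈ hSfin.toFinset, α s • tilde s := by
      refine sum_smul_cols_eq_sum_smul
        (Matrix.injective_cols_of_isUnit_det (isUnit_det_cleanupMatrix hQ.isUnit_det hℓ))
        tilde_injective (fun s hs => hS s (hSfin.mem_toFinset.mp hs))
        (fun i s _ h => (hα s i h).symm) (fun i h => ?_)
      by_contra hne
      obtain ⟨s, ⟨hs, -⟩, hsi, -⟩ :=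
        hQ.exists_mem_support_of_weight_pos hα ((hQ.weight_nonneg i).lt_of_ne' hne)
      exact h s (hSfin.mem_toFinset.mpr hs) hsi.symm

end IsActiveBasis

end Cleanup

/-- Properties of the active set cleanup step (ASC). -/
theorem asc_properties (n : ℕ)
    (T : Set (Fin n → ℝ)) (hTfin : T.Finite)
    (β : (Fin n → ℝ) → ℝ)
    (hβpos : ∀ s ∈ T, 0 < β s)
    (D : Set (Fin n → ℝ)) (hDT : D ⊆ T)
    (N : Matrix (Fin (n + 2)) (Fin (n + 2)) ℝ)
    -- assumption (1)
    (hNinv : IsUnit N.det)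
    (hNrow1 : ∀ i, 0 ≤ N ⟨n, by omega⟩ i)
    (hNrow2 : ∀ i, 1 ≤ N ⟨n + 1, by omega⟩ i)
    -- assumption (2)
    (hN0 : ∀ i, N ⟨n, by omega⟩ i = 0 → ∃ s ∈ T \ D, tilde s = fun j => N j i)
    -- assumption (3)
    (hTN : ∀ s ∈ T \ D, ∃ i, (fun j => N j i) = tilde s)
    -- the data produced by the ASC procedure
    (lam : Fin (n + 2) → ℝ) (Q M : Matrix (Fin (n + 2)) (Fin (n + 2)) ℝ)
    (α : (Fin n → ℝ) → ℝ) (S : Set (Fin n → ℝ))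
    -- case distinction of the ASC procedure
    (hbranch :
      (D = ∅ ∧
        (∀ i, ∀ s ∈ T, (fun j => N j i) = tilde s → lam i = β s) ∧
        (∀ i, (∀ s ∈ T, (fun j => N j i) ≠ tilde s) → lam i = 0) ∧
        Q = N) ∨
      (∃ v, D = {v} ∧
        ∃ (μ : Fin (n + 3) → ℝ) (r : Fin (n + 2) → ℝ) (k : Fin (n + 2)) (θ : ℝ),
          (∀ i : Fin (n + 2), ∀ s ∈ T,
            (fun j => N j i) = tilde s → μ i.castSucc = β s) ∧
          (∀ i : Fin (n + 2),
            (∀ s ∈ T, (fun j => N j i) ≠ tilde s) → μ i.castSucc = 0) ∧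
          μ (Fin.last (n + 2)) = β v ∧
          r = -(N⁻¹).mulVec (tilde v) ∧
          r k < 0 ∧
          (∀ i, r i < 0 → -μ k.castSucc / r k ≤ -μ i.castSucc / r i) ∧
          θ = -μ k.castSucc / r k ∧
          lam k = β v + θ ∧
          (∀ i, i ≠ k → lam i = μ i.castSucc + θ * r i) ∧
          (∀ j i, Q j i = if i = k then tilde v j else N j i)))
    -- choice of ℓ and construction of M, α, S
    (ℓ : Fin (n + 2)) (hℓ : Q ⟨n, by omega⟩ ℓ ≠ 0)
    (hM : ∀ j i, M j i =
      if lam i = 0 ∧ Q ⟨n, by omega⟩ i = 0 then Q j i + Q j ℓ else Q j i)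
    (hα1 : ∀ s, ∀ i, (fun j => M j i) = tilde s → α s = lam i)
    (hα0 : ∀ s, (∀ i, (fun j => M j i) ≠ tilde s) → α s = 0)
    (hS : S = {s | 0 < α s}) :
    -- conclusion (0): the ratio test is well defined
    (∀ v, D = {v} → ∃ i, (-(N⁻¹).mulVec (tilde v)) i < 0) ∧
    -- conclusion (4)
    (IsUnit M.det ∧ (∀ i, 0 ≤ M ⟨n, by omega⟩ i) ∧
      (∀ i, 1 ≤ M ⟨n + 1, by omega⟩ i)) ∧
    -- conclusion (5)
    (∀ i, 0 < lam i → ∃ s ∈ S ∩ T,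
      tilde s = (fun j => M j i) ∧ (∀ j, M j i = Q j i)) ∧
    -- conclusion (6)
    (∑ᶠ s ∈ T, β s • s) = (∑ᶠ s ∈ S, α s • s) ∧
    -- conclusion (7)
    (∀ i, M ⟨n, by omega⟩ i = 0 → ∃ s ∈ S, tilde s = fun j => M j i) ∧
    -- conclusion (8)
    (∀ s ∈ S, ∃ i, (fun j => M j i) = tilde s) ∧
    -- conclusion (9)
    (S ⊆ T ∧ S.Finite ∧ S.ncard ≤ n + 1) := by
  lift T to Finset (Fin n → ℝ) using hTfin
  have hQ : IsActiveBasis T β Q lam := by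
    rcases hbranch with ⟨rfl, hlam, hlam0, rfl⟩ |
      ⟨v, rfl, μ, r, k, θ, hμ, hμ0, -, hr, hrk, hmin, hθ, hlamk, hlam, hQ⟩
    · rw [Set.sdiff_empty] at hN0 hTN
      exact isActiveBasis_of_weights hβpos hNinv hNrow1 hNrow2 hN0 hTN hlam hlam0
    · obtain rfl : Q = N.updateCol k (tilde v) := by
        ext j i; rw [hQ, Matrix.updateCol_apply]
      exact isActiveBasis_updateCol hβpos (hDT rfl) hNinv hNrow1 hNrow2 hN0 hTN hμ hμ0 hr hrk
        hmin hθ hlamk hlam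
  obtain rfl : M = cleanupMatrix Q lam ℓ := Matrix.ext hM
  subst hS
  have h5 := fun i (hi : 0 < lam i) => hQ.exists_mem_support_of_weight_pos hα1 hi
  have h8 : ∀ s ∈ {s | 0 < α s}, ∃ i, (fun j => cleanupMatrix Q lam ℓ j i) = tilde s :=
    fun s hs => by_contra fun h => hs.ne' (hα0 s (not_exists.mp h))
  have hST : {s | 0 < α s} ⊆ (T : Set _) := fun s hs =>
    (h8 s hs).elim fun _ hi => hQ.mem_of_cleanupMatrix_col_eq_tilde hℓ hi
  obtain ⟨hSfin, hcard⟩ := finite_and_ncard_le_of_forall_exists_col_ne (ℓ := ℓ) fun s hs => by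
    obtain ⟨i, hi⟩ := h8 s hs
    exact ⟨i, fun hiℓ => cleanupMatrix_col_self_ne_tilde hℓ s (hiℓ ▸ hi), hi⟩
  have h6 : ∑ᶠ s ∈ (T : Set _), β s • s = ∑ᶠ s ∈ {s | 0 < α s}, α s • s := by
    rw [finsum_mem_coe_finset, finsum_mem_eq_finite_toFinset_sum _ hSfin]
    exact sum_smul_eq_of_sum_smul_tilde_eq
      (hQ.sum_smul_cols.symm.trans (hQ.sum_smul_cols_eq_sum_smul_support hℓ hα1 h8 hSfin))
  exact ⟨fun v _ => (exists_pos_inv_mulVec_tilde hNinv hNrow2 v).imp fun i hi => by simpa using hi,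
    ⟨isUnit_det_cleanupMatrix hQ.isUnit_det hℓ, hQ.cleanupMatrix_penultimate_nonneg,
      hQ.one_le_cleanupMatrix_last⟩, h5, h6,
    fun i hi => (h5 i (hQ.weight_pos_of_cleanupMatrix_penultimate_eq_zero hℓ hi)).imp
      fun _ hs => ⟨hs.1.1, hs.2.1⟩, h8, hST, hSfin, hcard⟩
end

section
/- (Single pivot step.) Let m ≥ 1, let N ∈ ℝ^{m×m} be invertible, let v, b ∈ ℝ^m, and let μ ∈ ℝ^{m+1} with μ ≥ 0 (entrywise) satisfy Σ_{i=1}^{m} μ_i·N_{:,i} + μ_{m+1}·v = b. Set r = −N^{−1}v and suppose r has at least one strictly negative entry. Choose k ∈ argmin_{i∈[m], r_i<0} (−μ_i/r_i) and set θ* = −μ_k/r_k ≥ 0. Let Q be N with its k-th column replaced by v, and define λ ∈ ℝ^m by λ_k = μ_{m+1} + θ* and λ_i = μ_i + θ*·r_i for i ≠ k. Then λ ≥ 0 (entrywise), Qλ = b, and Q is invertible. -/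
open Classical

/-- A single primal-simplex-like pivot step: given a nonnegative
representation of `b` using the columns of an invertible matrix `N` plus one extra
column `v`, one pivot produces a nonnegative representation of `b` using the columns
of the invertible matrix obtained from `N` by replacing its `k`-th column by `v`. -/
theorem single_pivot_step (m : ℕ) (hm : 1 ≤ m)
    (N : Matrix (Fin m) (Fin m) ℝ) (hN : IsUnit N.det)
    (v b : Fin m → ℝ)
    (μ : Fin (m + 1) → ℝ) (hμ : ∀ i, 0 ≤ μ i)
    (hrep : ∀ j, (∑ i : Fin m, μ i.castSucc * N j i) + μ (Fin.last m) * v j = b j)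
    (r : Fin m → ℝ) (hr : r = -(N⁻¹).mulVec v)
    (hneg : ∃ i, r i < 0)
    (k : Fin m) (hk : r k < 0)
    (hkmin : ∀ i, r i < 0 → -μ k.castSucc / r k ≤ -μ i.castSucc / r i)
    (θ : ℝ) (hθ : θ = -μ k.castSucc / r k)
    (Q : Matrix (Fin m) (Fin m) ℝ)
    (hQ : ∀ j i, Q j i = if i = k then v j else N j i)
    (lam : Fin m → ℝ)
    (hlamk : lam k = μ (Fin.last m) + θ)
    (hlam : ∀ i, i ≠ k → lam i = μ i.castSucc + θ * r i) :
    (∀ i, 0 ≤ lam i) ∧ Q.mulVec lam = b ∧ IsUnit Q.det := by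
  have hrk0 : r k ≠ 0 := ne_of_lt hk
  have hθ0 : 0 ≤ θ := by
    rw [hθ]
    rw [div_nonneg_iff]
    exact Or.inr ⟨neg_nonpos.mpr (hμ _), hk.le⟩
  have hθk : μ k.castSucc + θ * r k = 0 := by
    rw [hθ, div_mul_cancel₀ _ hrk0]; ring
  -- r entry relation: N⁻¹ v = -r
  have hinv : (N⁻¹).mulVec v = -r := by rw [hr]; simp
  have hNinv : N * N⁻¹ = 1 := Matrix.mul_nonsing_inv _ hN
  have hvr : N.mulVec r = -v := by
    have h1 : N.mulVec ((N⁻¹).mulVec v) = v := by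
      rw [Matrix.mulVec_mulVec, hNinv, Matrix.one_mulVec]
    rw [hinv, Matrix.mulVec_neg] at h1
    rw [← h1, neg_neg]
  refine ⟨?_, ?_, ?_⟩
  · intro i
    by_cases hik : i = k
    · subst hik; rw [hlamk]; have := hμ (Fin.last m); linarith
    · rw [hlam i hik]
      by_cases hri : r i < 0
      · have h1 := hkmin i hri
        rw [← hθ] at h1
        have h2 : -μ i.castSucc ≤ θ * r i := (le_div_iff_of_neg hri).mp h1
        linarith
      · push_neg at hri
        have := mul_nonneg hθ0 hri
        have := hμ i.castSucc
        linarith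
  · funext j
    have hb := hrep j
    have hv : ∑ i, N j i * r i = -v j := by
      have := congrFun hvr j
      simpa [Matrix.mulVec, dotProduct] using this
    have e1 : ∑ i ∈ Finset.univ.erase k, Q j i * lam i
        = ∑ i ∈ Finset.univ.erase k, N j i * (μ i.castSucc + θ * r i) := by
      apply Finset.sum_congr rfl
      intro i hi
      have hik : i ≠ k := Finset.ne_of_mem_erase hi
      rw [hQ j i, if_neg hik, hlam i hik]
    have e2 : ∑ i, Q j i * lam i
        = ∑ i, N j i * (μ i.castSucc + θ * r i) - N j k * (μ k.castSucc + θ * r k)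
          + v j * (μ (Fin.last m) + θ) := by
      rw [← Finset.sum_erase_add _ _ (Finset.mem_univ k),
          ← Finset.sum_erase_add _ (fun i => N j i * (μ i.castSucc + θ * r i)) (Finset.mem_univ k),
          e1, hQ j k, if_pos rfl, hlamk]
      ring
    have e3 : ∑ i, N j i * (μ i.castSucc + θ * r i)
        = ∑ i, μ i.castSucc * N j i + θ * ∑ i, N j i * r i := by
      rw [Finset.mul_sum, ← Finset.sum_add_distrib]
      apply Finset.sum_congr rfl
      intro i _
      ring
    show ∑ i, Q j i * lam i = b j
    rw [e2, e3, hθk, hv]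
    linarith
  · have hQu : Q = N.updateCol k v := by
      ext j i
      rw [hQ, Matrix.updateCol_apply]
    have hdet : Q.det = (Matrix.cramer N v) k := by
      rw [hQu, Matrix.cramer_apply]
    have hadj : (N.adjugate.mulVec v) k = Q.det := by
      rw [hdet, Matrix.cramer_eq_adjugate_mulVec]
    have hinvk : (N⁻¹).mulVec v k = Ring.inverse N.det * Q.det := by
      rw [Matrix.inv_def, Matrix.smul_mulVec, Pi.smul_apply, hadj, smul_eq_mul]
    have hdetne : N.det ≠ 0 := hN.ne_zero
    have hrkk : (N⁻¹).mulVec v k = -r k := by rw [hinv]; rfl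
    rw [hrkk, Ring.inverse_eq_inv] at hinvk
    have : Q.det = N.det * (-r k) := by
      field_simp at hinvk
      linarith [hinvk]
    rw [this]
    exact (IsUnit.mul_iff.mpr ⟨hN, isUnit_iff_ne_zero.mpr (by linarith)⟩)
end
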